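/- arXiv:2204.03271 — 5 statements merged into one kernel-verified Lean document; each statement's English description precedes it below -/
import Mathlib

section
/- Let H ∈ (0, 1/2) and α > 0, and define c(t) := ∫_{−∞}^{∞} cos(tx)·|x|^{1−2H}/(α² + x²) dx for t ∈ ℝ. Then there exists a constant C > 0 such that |c(t)| ≤ C·|t|^{2H−2} for all t with |t| ≥ 1. -/
/-!
Write `f(x) = |x|^(1-2H) / (α² + x²)` (`spectralDensity (1 - 2H) α` below) and
`Δ_h f(x) = f(x + h) - 2 f(x) + f(x - h)`. For `h = π / |t|` the shifts `x ↦ x ± h` change the sign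
of `cos (t x)`, hence `-4 c(t) = ∫ cos (t x) Δ_h f(x) dx` and `|c(t)| ≤ ‖Δ_h f‖₁ / 4`. Since
`f(x) ≲ |x|^(1-2H)` and `|f''(x)| ≲ |x|^(-1-2H)`, splitting at `|x| = 2h` gives
`‖Δ_h f‖₁ ≲ h · h^(1-2H) + h² ∫_{2h}^∞ x^(-1-2H) dx ≲ h^(2-2H) = (π / |t|)^(2-2H)`.
-/

open Real MeasureTheory Set

noncomputable section

def secondDiff (f : ℝ → ℝ) (h x : ℝ) : ℝ := f (x + h) - 2 * f x + f (x - h)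

section SecondDifference

variable {f : ℝ → ℝ} {p h : ℝ}

theorem MeasureTheory.Integrable.secondDiff (hf : Integrable f) (h : ℝ) :
    Integrable (secondDiff f h) :=
  ((hf.comp_add_right h).sub (hf.const_mul 2)).add (hf.comp_sub_right h)

theorem secondDiff_neg (hf : ∀ x, f (-x) = f x) (h x : ℝ) :
    secondDiff f h (-x) = secondDiff f h x := by
  simp only [secondDiff, show -x + h = -(x - h) by ring, show -x - h = -(x + h) by ring, hf]
  ring

theorem abs_secondDiff_le {f' f'' : ℝ → ℝ} {h x M : ℝ} (hh : 0 ≤ h)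
    (hf : ∀ y ∈ Icc (x - h) (x + h), HasDerivAt f (f' y) y)
    (hf' : ∀ y ∈ Icc (x - h) (x + h), HasDerivAt f' (f'' y) y)
    (hM : ∀ y ∈ Icc (x - h) (x + h), |f'' y| ≤ M) :
    |secondDiff f h x| ≤ M * h ^ 2 := by
  have hincr : ∀ y ∈ Icc (x - h) x, ‖f' (y + h) - f' y‖ ≤ M * h := by
    intro y hy
    have hsub : Icc y (y + h) ⊆ Icc (x - h) (x + h) :=
      Icc_subset_Icc hy.1 (by linarith [hy.2])
    simpa [abs_of_nonneg hh] using
      (convex_Icc y (y + h)).norm_image_sub_le_of_norm_hasDerivWithin_le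
        (fun z hz => (hf' z (hsub hz)).hasDerivWithinAt) (fun z hz => hM z (hsub hz))
        (left_mem_Icc.2 (by linarith)) (right_mem_Icc.2 (by linarith))
  have hderiv : ∀ y ∈ Icc (x - h) x, HasDerivWithinAt (fun y => f (y + h) - f y)
      (f' (y + h) - f' y) (Icc (x - h) x) y := fun y hy =>
    ((HasDerivAt.comp_add_const y h (hf (y + h) ⟨by linarith [hy.1], by linarith [hy.2]⟩)).sub
      (hf y ⟨hy.1, by linarith [hy.2]⟩)).hasDerivWithinAt
  have := (convex_Icc (x - h) x).norm_image_sub_le_of_norm_hasDerivWithin_le hderiv hincr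
    (left_mem_Icc.2 (by linarith)) (right_mem_Icc.2 (by linarith))
  rw [sub_add_cancel, sub_sub_cancel, Real.norm_eq_abs, Real.norm_eq_abs, abs_of_nonneg hh] at this
  have hsplit : secondDiff f h x = f (x + h) - f x - (f x - f (x - h)) := by
    unfold secondDiff; ring
  rwa [hsplit, sq, ← mul_assoc]

theorem cos_mul_add_pi_div_abs {s : ℝ} (hs : s ≠ 0) (x : ℝ) :
    cos (s * (x + π / |s|)) = -cos (s * x) := by
  rcases abs_choice s with h | h <;> rw [h, mul_add]
  · rw [mul_div_cancel₀ _ hs, cos_add_pi]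
  · rw [mul_div_assoc', mul_comm s π, div_neg, mul_div_cancel_right₀ _ hs, ← sub_eq_add_neg,
      cos_sub_pi]

theorem integral_cos_mul_secondDiff (hf : Integrable f) {s : ℝ} (hs : s ≠ 0) :
    ∫ x, cos (s * x) * secondDiff f (π / |s|) x = -4 * ∫ x, cos (s * x) * f x := by
  set h := π / |s|
  have hcos : ∀ {g : ℝ → ℝ}, Integrable g → Integrable fun x => cos (s * x) * g x := fun hg =>
    hg.bdd_mul (by fun_prop) (c := 1) (ae_of_all _ fun x => by simpa using abs_cos_le_one (s * x))
  have hplus : ∫ x, cos (s * x) * f (x + h) = -∫ x, cos (s * x) * f x := by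
    rw [← integral_neg, ← integral_add_right_eq_self (fun x => -(cos (s * x) * f x)) h]
    congr 1 with x
    rw [cos_mul_add_pi_div_abs hs x, neg_mul, neg_neg]
  have hminus : ∫ x, cos (s * x) * f (x - h) = -∫ x, cos (s * x) * f x := by
    rw [← integral_neg, ← integral_sub_right_eq_self (fun x => -(cos (s * x) * f x)) h]
    congr 1 with x
    have hshift := cos_mul_add_pi_div_abs hs (x - h)
    rw [sub_add_cancel] at hshift
    rw [hshift, neg_mul]
  have i₁ := hcos (hf.comp_add_right h)
  have i₂ := hcos (hf.const_mul 2)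
  have i₃ := hcos (hf.comp_sub_right h)
  simp only [secondDiff, mul_add, mul_sub]
  rw [integral_add (by exact i₁.sub i₂) i₃, integral_sub i₁ i₂, hplus, hminus]
  simp only [mul_left_comm _ (2 : ℝ), integral_const_mul]
  ring

theorem abs_integral_cos_mul_le (hf : Integrable f) {s : ℝ} (hs : s ≠ 0) :
    |∫ x, cos (s * x) * f x| ≤ (∫ x, |secondDiff f (π / |s|) x|) / 4 := by
  calc |∫ x, cos (s * x) * f x| = |∫ x, cos (s * x) * secondDiff f (π / |s|) x| / 4 := by
        rw [integral_cos_mul_secondDiff hf hs, abs_mul]; norm_num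
    _ ≤ (∫ x, |secondDiff f (π / |s|) x|) / 4 := by
        gcongr
        refine (abs_integral_le_integral_abs).trans (integral_mono_of_nonneg
          (ae_of_all _ fun x => abs_nonneg _) (hf.secondDiff _).abs (ae_of_all _ fun x => ?_))
        simpa [abs_mul] using mul_le_of_le_one_left (abs_nonneg _) (abs_cos_le_one (s * x))

theorem setIntegral_Ioc_abs_secondDiff_le {A : ℝ} (hp : 0 ≤ p) (hA : ∀ x, |f x| ≤ A * |x| ^ p)
    (hh : 0 < h) : ∫ x in Ioc 0 (2 * h), |secondDiff f h x| ≤ 8 * 3 ^ p * A * h ^ (p + 1) := by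
  have hA0 : 0 ≤ A := by simpa using (abs_nonneg _).trans (hA 1)
  have hsmall : ∀ y, |y| ≤ 3 * h → |f y| ≤ A * (3 * h) ^ p := fun y hy =>
    (hA y).trans (by gcongr)
  have hpoint : ∀ x ∈ Ioc 0 (2 * h), |secondDiff f h x| ≤ 4 * A * (3 * h) ^ p := by
    rintro x ⟨hx0, hx2⟩
    have h₁ := hsmall (x + h) (abs_le.2 ⟨by linarith, by linarith⟩)
    have h₂ := hsmall x (abs_le.2 ⟨by linarith, by linarith⟩)
    have h₃ := hsmall (x - h) (abs_le.2 ⟨by linarith, by linarith⟩)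
    calc |secondDiff f h x| ≤ |f (x + h)| + 2 * |f x| + |f (x - h)| := by
          unfold secondDiff
          have := abs_add_le (f (x + h) - 2 * f x) (f (x - h))
          have := abs_sub (f (x + h)) (2 * f x)
          rw [abs_mul, abs_two] at this
          linarith
      _ ≤ 4 * A * (3 * h) ^ p := by linarith
  calc ∫ x in Ioc 0 (2 * h), |secondDiff f h x|
      ≤ ∫ x in Ioc 0 (2 * h), 4 * A * (3 * h) ^ p :=
        integral_mono_of_nonneg (ae_of_all _ fun x => abs_nonneg _)
          (integrableOn_const measure_Ioc_lt_top.ne)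
          ((ae_restrict_iff' measurableSet_Ioc).2 (ae_of_all _ hpoint))
    _ = 8 * 3 ^ p * A * h ^ (p + 1) := by
        rw [setIntegral_const, Real.volume_real_Ioc_of_le (by linarith), smul_eq_mul,
          mul_rpow (by norm_num) hh.le, rpow_add_one hh.ne']
        ring

theorem setIntegral_Ioi_abs_secondDiff_le {f' f'' : ℝ → ℝ} {B : ℝ} (hp : p < 1)
    (hf' : ∀ x > 0, HasDerivAt f (f' x) x) (hf'' : ∀ x > 0, HasDerivAt f' (f'' x) x)
    (hB : ∀ x > 0, |f'' x| ≤ B * x ^ (p - 2)) (hh : 0 < h) :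
    ∫ x in Ioi (2 * h), |secondDiff f h x| ≤ 2 * B / (1 - p) * h ^ (p + 1) := by
  have hB0 : 0 ≤ B := by simpa using (abs_nonneg _).trans (hB 1 one_pos)
  have hpoint : ∀ x ∈ Ioi (2 * h), |secondDiff f h x| ≤ B * (2⁻¹ * x) ^ (p - 2) * h ^ 2 := by
    intro x hx
    have hpos : ∀ y ∈ Icc (x - h) (x + h), 0 < 2⁻¹ * x ∧ 2⁻¹ * x ≤ y := fun y hy =>
      ⟨by linarith [mem_Ioi.1 hx], by linarith [mem_Ioi.1 hx, hy.1]⟩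
    refine abs_secondDiff_le hh.le (fun y hy => hf' y ((hpos y hy).1.trans_le (hpos y hy).2))
      (fun y hy => hf'' y ((hpos y hy).1.trans_le (hpos y hy).2)) fun y hy => ?_
    obtain ⟨hx0, hxy⟩ := hpos y hy
    exact (hB y (hx0.trans_le hxy)).trans
      (mul_le_mul_of_nonneg_left (rpow_le_rpow_of_nonpos hx0 hxy (by linarith)) hB0)
  have hhalf : (2⁻¹ : ℝ) * (2 * h) = h := by ring
  have hint : IntegrableOn (fun x : ℝ => (2⁻¹ * x) ^ (p - 2)) (Ioi (2 * h)) := by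
    rw [integrableOn_Ioi_comp_mul_left_iff (fun x => x ^ (p - 2)) _ (by norm_num), hhalf]
    exact integrableOn_Ioi_rpow_of_lt (by linarith) hh
  calc ∫ x in Ioi (2 * h), |secondDiff f h x|
      ≤ ∫ x in Ioi (2 * h), B * h ^ 2 * (2⁻¹ * x) ^ (p - 2) :=
        integral_mono_of_nonneg (ae_of_all _ fun x => abs_nonneg _) (hint.const_mul _)
          ((ae_restrict_iff' measurableSet_Ioi).2 (ae_of_all _ fun x hx =>
            (hpoint x hx).trans_eq (by ring)))
    _ = 2 * B / (1 - p) * h ^ (p + 1) := by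
        rw [integral_const_mul, integral_comp_mul_left_Ioi (fun x => x ^ (p - 2)) _ (by norm_num),
          hhalf, integral_Ioi_rpow_of_lt (by linarith) hh, smul_eq_mul,
          show p - 2 + 1 = p - 1 by ring, show p + 1 = 2 + (p - 1) by ring, rpow_add hh, rpow_two]
        field_simp
        rw [← neg_sub 1 p, div_neg, neg_neg]

theorem integral_abs_secondDiff_le_of_even {f' f'' : ℝ → ℝ} {A B : ℝ} (hp₀ : 0 ≤ p)
    (hp₁ : p < 1) (hf : Integrable f) (heven : ∀ x, f (-x) = f x) (hA : ∀ x, |f x| ≤ A * |x| ^ p)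
    (hf' : ∀ x > 0, HasDerivAt f (f' x) x) (hf'' : ∀ x > 0, HasDerivAt f' (f'' x) x)
    (hB : ∀ x > 0, |f'' x| ≤ B * x ^ (p - 2)) (hh : 0 < h) :
    ∫ x, |secondDiff f h x| ≤ 2 * (8 * 3 ^ p * A + 2 * B / (1 - p)) * h ^ (p + 1) := by
  have hint := (hf.secondDiff h).abs
  calc ∫ x, |secondDiff f h x| = ∫ x, |secondDiff f h (|x|)| := by
        congr 1 with x
        rcases abs_choice x with hx | hx <;> rw [hx]
        rw [secondDiff_neg heven]
    _ = 2 * ∫ x in Ioi 0, |secondDiff f h x| :=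
        integral_comp_abs (f := fun y => |secondDiff f h y|)
    _ = 2 * ((∫ x in Ioc 0 (2 * h), |secondDiff f h x|)
          + ∫ x in Ioi (2 * h), |secondDiff f h x|) := by
        rw [← Ioc_union_Ioi_eq_Ioi (by linarith : (0 : ℝ) ≤ 2 * h),
          setIntegral_union (Ioc_disjoint_Ioi le_rfl) measurableSet_Ioi hint.integrableOn
            hint.integrableOn]
    _ ≤ 2 * (8 * 3 ^ p * A * h ^ (p + 1) + 2 * B / (1 - p) * h ^ (p + 1)) := by
        gcongr
        · exact setIntegral_Ioc_abs_secondDiff_le hp₀ hA hh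
        · exact setIntegral_Ioi_abs_secondDiff_le hp₁ hf' hf'' hB hh
    _ = 2 * (8 * 3 ^ p * A + 2 * B / (1 - p)) * h ^ (p + 1) := by ring

end SecondDifference

def spectralDensity (p α x : ℝ) : ℝ := |x| ^ p / (α ^ 2 + x ^ 2)

-- The derivatives of `spectralDensity p α` on `(0, ∞)` only: they use `x` in place of `|x|`.
def spectralDensityDeriv (p α x : ℝ) : ℝ :=
  p * x ^ (p - 1) * (α ^ 2 + x ^ 2)⁻¹ + x ^ p * (-(2 * x) / (α ^ 2 + x ^ 2) ^ 2)

def spectralDensityDeriv2 (p α x : ℝ) : ℝ :=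
  p * (p - 1) * x ^ (p - 2) * (α ^ 2 + x ^ 2)⁻¹
    + 2 * (p * x ^ (p - 1)) * (-(2 * x) / (α ^ 2 + x ^ 2) ^ 2)
    + x ^ p * ((6 * x ^ 2 - 2 * α ^ 2) / (α ^ 2 + x ^ 2) ^ 3)

section SpectralDensity

variable {p α x : ℝ}

theorem spectralDensity_neg (p α x : ℝ) : spectralDensity p α (-x) = spectralDensity p α x := by
  simp [spectralDensity]

theorem abs_spectralDensity_le (hα : α ≠ 0) (x : ℝ) :
    |spectralDensity p α x| ≤ (α ^ 2)⁻¹ * |x| ^ p := by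
  rw [spectralDensity, abs_of_nonneg (by positivity), div_eq_inv_mul]
  gcongr
  nlinarith

theorem spectralDensity_le_one_add_abs_rpow (hp : 0 ≤ p) (hα : α ≠ 0) (x : ℝ) :
    spectralDensity p α x ≤ 2 * (1 + (α ^ 2)⁻¹) * (1 + |x|) ^ (p - 2) := by
  have hs : 0 < α ^ 2 + x ^ 2 := by positivity
  have hsq : (1 + |x|) ^ 2 ≤ 2 * (1 + (α ^ 2)⁻¹) * (α ^ 2 + x ^ 2) := by
    have hinv : (α ^ 2)⁻¹ * α ^ 2 = 1 := inv_mul_cancel₀ (by positivity)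
    nlinarith [sq_abs x, sq_nonneg (|x| - 1), sq_nonneg α,
      mul_nonneg (inv_nonneg.2 (sq_nonneg α)) (sq_nonneg x)]
  calc spectralDensity p α x ≤ (1 + |x|) ^ p / (α ^ 2 + x ^ 2) := by
        unfold spectralDensity; gcongr; linarith
    _ = (1 + |x|) ^ (p - 2) * (1 + |x|) ^ 2 / (α ^ 2 + x ^ 2) := by
        rw [← rpow_natCast (1 + |x|) 2, ← rpow_add (by positivity), Nat.cast_ofNat,
          sub_add_cancel]
    _ ≤ 2 * (1 + (α ^ 2)⁻¹) * (1 + |x|) ^ (p - 2) := by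
        rw [mul_div_assoc, mul_comm _ ((1 + |x|) ^ (p - 2))]
        gcongr
        rwa [div_le_iff₀ hs]

theorem integrable_spectralDensity (hp₀ : 0 ≤ p) (hp₁ : p < 1) (hα : α ≠ 0) :
    Integrable (spectralDensity p α) := by
  refine ((integrable_one_add_norm (E := ℝ) (r := 2 - p) (by simp; linarith)).const_mul
    (2 * (1 + (α ^ 2)⁻¹))).mono'
    (Measurable.aestronglyMeasurable (by unfold spectralDensity; fun_prop)) (ae_of_all _ fun x => ?_)
  rw [Real.norm_eq_abs, Real.norm_eq_abs, neg_sub,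
    abs_of_nonneg (by unfold spectralDensity; positivity)]
  exact spectralDensity_le_one_add_abs_rpow hp₀ hα x

theorem hasDerivAt_inv_sq_add_sq (α : ℝ) (hx : x ≠ 0) :
    HasDerivAt (fun y => (α ^ 2 + y ^ 2)⁻¹) (-(2 * x) / (α ^ 2 + x ^ 2) ^ 2) x := by
  refine (((hasDerivAt_pow 2 x).const_add (α ^ 2)).inv (by positivity)).congr_deriv ?_
  norm_num

theorem hasDerivAt_deriv_inv_sq_add_sq (α : ℝ) (hx : x ≠ 0) :
    HasDerivAt (fun y => -(2 * y) / (α ^ 2 + y ^ 2) ^ 2)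
      ((6 * x ^ 2 - 2 * α ^ 2) / (α ^ 2 + x ^ 2) ^ 3) x := by
  have hs : α ^ 2 + x ^ 2 ≠ 0 := by positivity
  refine ((((hasDerivAt_id x).const_mul 2).neg).div
    (((hasDerivAt_pow 2 x).const_add (α ^ 2)).pow 2) (pow_ne_zero 2 hs)).congr_deriv ?_
  simp only [id, Pi.pow_apply, Pi.neg_apply]
  field_simp
  ring

theorem hasDerivAt_spectralDensity (hx : 0 < x) :
    HasDerivAt (spectralDensity p α) (spectralDensityDeriv p α x) x := by
  have hloc : (fun y => y ^ p * (α ^ 2 + y ^ 2)⁻¹) =ᶠ[nhds x] spectralDensity p α := by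
    filter_upwards [Ioi_mem_nhds hx] with y hy
    rw [spectralDensity, abs_of_pos (mem_Ioi.1 hy), div_eq_mul_inv]
  exact (((hasDerivAt_rpow_const (Or.inl hx.ne')).mul
    (hasDerivAt_inv_sq_add_sq α hx.ne'))).congr_of_eventuallyEq hloc.symm

theorem hasDerivAt_spectralDensityDeriv (hx : 0 < x) :
    HasDerivAt (spectralDensityDeriv p α) (spectralDensityDeriv2 p α x) x := by
  have hu' : HasDerivAt (fun y => p * y ^ (p - 1)) (p * (p - 1) * x ^ (p - 2)) x := by
    refine ((hasDerivAt_rpow_const (p := p - 1) (Or.inl hx.ne')).const_mul p).congr_deriv ?_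
    rw [sub_sub, one_add_one_eq_two, mul_assoc]
  refine ((hu'.mul (hasDerivAt_inv_sq_add_sq α hx.ne')).add
    ((hasDerivAt_rpow_const (Or.inl hx.ne')).mul
      (hasDerivAt_deriv_inv_sq_add_sq α hx.ne'))).congr_deriv ?_
  unfold spectralDensityDeriv2
  ring

theorem abs_spectralDensityDeriv2_le (hp₀ : 0 ≤ p) (hp₁ : p ≤ 1) (hα : α ≠ 0) (hx : 0 < x) :
    |spectralDensityDeriv2 p α x| ≤ 9 / α ^ 2 * x ^ (p - 2) := by
  set s := α ^ 2 + x ^ 2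
  set t := x ^ 2 / s
  have hs0 : 0 < s := by positivity
  have ht₀ : 0 ≤ t := by positivity
  have ht₁ : t ≤ 1 := (div_le_one hs0).2 (le_add_of_nonneg_left (sq_nonneg α))
  have e₁ : x ^ (p - 1) = x ^ (p - 2) * x := by
    rw [← rpow_add_one hx.ne']; ring_nf
  have e₂ : x ^ p = x ^ (p - 2) * x ^ 2 := by
    rw [← rpow_natCast, ← rpow_add hx]; norm_num
  -- with `t = x² / s ∈ [0, 1]`, `s · f''(x) / x ^ (p - 2)` is a polynomial in `p` and `t`
  have hform : spectralDensityDeriv2 p α x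
      = x ^ (p - 2) * ((p * (p - 1) - 4 * p * t + t * (8 * t - 2)) / s) := by
    rw [spectralDensityDeriv2, e₁, e₂]
    simp only [t, s]
    field_simp
    ring
  have hpoly : |p * (p - 1) - 4 * p * t + t * (8 * t - 2)| ≤ 9 := by
    rw [abs_le]; constructor <;> nlinarith [mul_nonneg hp₀ ht₀]
  rw [hform, abs_mul, abs_of_pos (rpow_pos_of_pos hx _), abs_div, abs_of_pos hs0, mul_comm]
  gcongr
  exact le_add_of_nonneg_right (sq_nonneg x)

theorem exists_integral_abs_secondDiff_spectralDensity_le (hp₀ : 0 ≤ p) (hp₁ : p < 1)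
    (hα : α ≠ 0) :
    ∃ C > 0, ∀ h > 0, ∫ x, |secondDiff (spectralDensity p α) h x| ≤ C * h ^ (p + 1) := by
  have : 0 < 1 - p := sub_pos.2 hp₁
  refine ⟨2 * (8 * 3 ^ p * (α ^ 2)⁻¹ + 2 * (9 / α ^ 2) / (1 - p)), by positivity, fun h hh => ?_⟩
  exact integral_abs_secondDiff_le_of_even hp₀ hp₁ (integrable_spectralDensity hp₀ hp₁ hα)
    (spectralDensity_neg p α) (abs_spectralDensity_le hα)
    (fun x hx => hasDerivAt_spectralDensity hx) (fun x hx => hasDerivAt_spectralDensityDeriv hx)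
    (fun x hx => abs_spectralDensityDeriv2_le hp₀ hp₁.le hα hx) hh

end SpectralDensity

end

/-- For `H ∈ (0,1/2)`, `α > 0` and `c(t) := ∫ cos(tx) |x|^{1-2H}/(α²+x²) dx`, there is `C > 0`
with `|c(t)| ≤ C |t|^{2H-2}` for all `|t| ≥ 1`. -/
theorem stmt_2 (H α : ℝ) (hH : H ∈ Set.Ioo (0 : ℝ) (1/2)) (hα : 0 < α)
    (c : ℝ → ℝ)
    (hc : ∀ t : ℝ, c t = ∫ x : ℝ, Real.cos (t * x) * (|x| ^ (1 - 2*H) / (α ^ 2 + x ^ 2))) :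
    ∃ C > 0, ∀ t : ℝ, 1 ≤ |t| → |c t| ≤ C * |t| ^ (2*H - 2) := by
  obtain ⟨hH₀, hH₁⟩ := hH
  obtain ⟨C, hC, hbound⟩ :=
    exists_integral_abs_secondDiff_spectralDensity_le (p := 1 - 2 * H) (by linarith) (by linarith)
      hα.ne'
  refine ⟨C * π ^ (2 - 2 * H) / 4, by positivity, fun t ht => ?_⟩
  have ht₀ : 0 < |t| := by linarith
  calc |c t| = |∫ x, cos (t * x) * spectralDensity (1 - 2 * H) α x| := by rw [hc t]; rfl
    _ ≤ (∫ x, |secondDiff (spectralDensity (1 - 2 * H) α) (π / |t|) x|) / 4 :=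
        abs_integral_cos_mul_le (integrable_spectralDensity (by linarith) (by linarith) hα.ne')
          (abs_pos.1 ht₀)
    _ ≤ C * (π / |t|) ^ (1 - 2 * H + 1) / 4 := by gcongr; exact hbound _ (by positivity)
    _ = C * π ^ (2 - 2 * H) / 4 * |t| ^ (2 * H - 2) := by
        rw [show 1 - 2 * H + 1 = 2 - 2 * H by ring, show 2 * H - 2 = -(2 - 2 * H) by ring,
          div_rpow pi_pos.le ht₀.le, rpow_neg ht₀.le]
        ring
end

section
/- Let H ∈ (0, 1/2) and let c : ℝ → ℝ be measurable with ‖c‖_{L¹(ℝ)} < ∞. Then there exists a constant C > 0, depending only on H and ‖c‖_{L¹(ℝ)}, such that for all T ≥ 1: (1/T²)·∫₁^{T} ∫₀^{t₁−1} ( ∫₀^{t₂} ∫₀^{t₂} (t₁−s₁)^{−H−1/2}(t₂−s₂)^{−H−1/2} |c(s₁−s₂)| ds₁ ds₂ )² dt₂ dt₁ ≤ C·T^{−2H}. -/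
/-!
Since `s₁ ≤ t₂`, the kernel `(t₁ - s₁)^(-H-1/2)` is at most `(t₁ - t₂)^(-H-1/2)`; the `s₁`-integral
of `|c(s₁ - s₂)|` is then at most `‖c‖₁`, and the `s₂`-integral of `(t₂ - s₂)^(-H-1/2)` equals
`t₂^(1/2-H)/(1/2-H) ≤ T^(1/2-H)/(1/2-H)`. Squaring leaves `(t₁ - t₂)^(-2H-1)`, whose integral over
`t₂ ≤ t₁ - 1` is at most `1/(2H)`, so the double integral in `t₁, t₂` is `O(T · T^(1-2H))`.
-/

open Real MeasureTheory Set

noncomputable def kernelIntegral (r : ℝ) (f : ℝ → ℝ) (t₁ t₂ : ℝ) : ℝ :=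
  ∫ s₂ in (0 : ℝ)..t₂, ∫ s₁ in (0 : ℝ)..t₂, (t₁ - s₁) ^ r * (t₂ - s₂) ^ r * f (s₁ - s₂)

lemma intervalIntegral_mono_of_nonneg {f g : ℝ → ℝ} {a b : ℝ} (hab : a ≤ b)
    (hf : ∀ x ∈ Ioc a b, 0 ≤ f x) (hfg : ∀ x ∈ Ioc a b, f x ≤ g x)
    (hg : IntervalIntegrable g volume a b) :
    ∫ x in a..b, f x ≤ ∫ x in a..b, g x := by
  rw [intervalIntegral.integral_of_le hab, intervalIntegral.integral_of_le hab]
  exact integral_mono_of_nonneg (ae_restrict_of_forall_mem measurableSet_Ioc hf) hg.1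
    (ae_restrict_of_forall_mem measurableSet_Ioc hfg)

lemma intervalIntegral_comp_sub_right_le_integral {f : ℝ → ℝ} (hf : Integrable f)
    (hf0 : ∀ x, 0 ≤ f x) {a b : ℝ} (hab : a ≤ b) (u : ℝ) :
    ∫ x in a..b, f (x - u) ≤ ∫ x, f x := by
  rw [intervalIntegral.integral_of_le hab, ← integral_sub_right_eq_self f u]
  exact setIntegral_le_integral (hf.comp_sub_right u) (.of_forall fun x ↦ hf0 (x - u))

lemma integral_sub_rpow {r : ℝ} (hr : -1 < r) (t : ℝ) :
    ∫ s in (0 : ℝ)..t, (t - s) ^ r = t ^ (r + 1) / (r + 1) := by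
  rw [intervalIntegral.integral_comp_sub_left (fun u ↦ u ^ r), sub_self, sub_zero,
    integral_rpow (.inl hr), zero_rpow (by linarith), sub_zero]

lemma integral_sub_rpow_le {p : ℝ} (hp : p < -1) {t : ℝ} (ht : 1 ≤ t) :
    ∫ s in (0 : ℝ)..(t - 1), (t - s) ^ p ≤ 1 / -(p + 1) := by
  have hzero : (0 : ℝ) ∉ uIcc 1 t := by
    rw [uIcc_of_le ht]; exact fun h ↦ absurd h.1 (by norm_num)
  rw [intervalIntegral.integral_comp_sub_left (fun u ↦ u ^ p), sub_sub_cancel, sub_zero,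
    integral_rpow (.inr ⟨hp.ne, hzero⟩), one_rpow, ← neg_div_neg_eq, neg_sub]
  exact div_le_div_of_nonneg_right (by linarith [rpow_nonneg (zero_le_one.trans ht) (p + 1)])
    (by linarith)

section Kernel

variable {f : ℝ → ℝ} {r t₁ t₂ : ℝ}

lemma kernel_integrand_nonneg (hf0 : ∀ x, 0 ≤ f x) {s₁ s₂ : ℝ} (hs₁ : s₁ ≤ t₂) (hs₂ : s₂ ≤ t₂)
    (ht : t₂ ≤ t₁) : 0 ≤ (t₁ - s₁) ^ r * (t₂ - s₂) ^ r * f (s₁ - s₂) := by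
  have : 0 ≤ t₁ - s₁ := by linarith
  have : 0 ≤ t₂ - s₂ := by linarith
  have := hf0 (s₁ - s₂)
  positivity

lemma kernelIntegral_nonneg (hf0 : ∀ x, 0 ≤ f x) (ht₂ : 0 ≤ t₂) (ht : t₂ ≤ t₁) :
    0 ≤ kernelIntegral r f t₁ t₂ :=
  intervalIntegral.integral_nonneg ht₂ fun _ hs₂ ↦ intervalIntegral.integral_nonneg ht₂
    fun _ hs₁ ↦ kernel_integrand_nonneg hf0 hs₁.2 hs₂.2 ht

lemma kernelIntegral_le (hf : Integrable f) (hf0 : ∀ x, 0 ≤ f x) (hr : -1 < r) (hr0 : r ≤ 0)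
    (ht₂ : 0 ≤ t₂) (ht : t₂ < t₁) :
    kernelIntegral r f t₁ t₂ ≤ (t₁ - t₂) ^ r * (∫ x, f x) * (t₂ ^ (r + 1) / (r + 1)) := by
  have inner_le : ∀ s₂ ∈ Ioc 0 t₂, ∫ s₁ in (0 : ℝ)..t₂, (t₁ - s₁) ^ r * (t₂ - s₂) ^ r * f (s₁ - s₂)
      ≤ (t₁ - t₂) ^ r * (∫ x, f x) * (t₂ - s₂) ^ r := by
    intro s₂ hs₂
    have hf_shift : IntervalIntegrable (fun s₁ ↦ f (s₁ - s₂)) volume 0 t₂ :=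
      (hf.comp_sub_right s₂).intervalIntegrable
    calc ∫ s₁ in (0 : ℝ)..t₂, (t₁ - s₁) ^ r * (t₂ - s₂) ^ r * f (s₁ - s₂)
        ≤ ∫ s₁ in (0 : ℝ)..t₂, (t₁ - t₂) ^ r * ((t₂ - s₂) ^ r * f (s₁ - s₂)) := by
          refine intervalIntegral_mono_of_nonneg ht₂
            (fun s₁ hs₁ ↦ kernel_integrand_nonneg hf0 hs₁.2 hs₂.2 ht.le) (fun s₁ hs₁ ↦ ?_)
            ((hf_shift.const_mul _).const_mul _)
          have : 0 ≤ t₂ - s₂ := sub_nonneg.2 hs₂.2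
          have := hf0 (s₁ - s₂)
          rw [mul_assoc]
          exact mul_le_mul_of_nonneg_right
            (rpow_le_rpow_of_nonpos (sub_pos.2 ht) (by linarith [hs₁.2]) hr0) (by positivity)
      _ = (t₁ - t₂) ^ r * (t₂ - s₂) ^ r * ∫ s₁ in (0 : ℝ)..t₂, f (s₁ - s₂) := by
          rw [intervalIntegral.integral_const_mul, intervalIntegral.integral_const_mul, mul_assoc]
      _ ≤ (t₁ - t₂) ^ r * (∫ x, f x) * (t₂ - s₂) ^ r := by
          have : 0 ≤ t₂ - s₂ := sub_nonneg.2 hs₂.2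
          have : 0 ≤ t₁ - t₂ := by linarith
          rw [mul_right_comm]
          gcongr
          exact intervalIntegral_comp_sub_right_le_integral hf hf0 ht₂ s₂
  have hpow : IntervalIntegrable (fun s₂ ↦ (t₂ - s₂) ^ r) volume 0 t₂ := by
    simpa using (intervalIntegral.intervalIntegrable_rpow' (a := t₂) (b := 0) hr).comp_sub_left t₂
  calc kernelIntegral r f t₁ t₂
      ≤ ∫ s₂ in (0 : ℝ)..t₂, (t₁ - t₂) ^ r * (∫ x, f x) * (t₂ - s₂) ^ r :=
        intervalIntegral_mono_of_nonneg ht₂ (fun _ hs₂ ↦ intervalIntegral.integral_nonneg ht₂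
          fun _ hs₁ ↦ kernel_integrand_nonneg hf0 hs₁.2 hs₂.2 ht.le) inner_le (hpow.const_mul _)
    _ = (t₁ - t₂) ^ r * (∫ x, f x) * (t₂ ^ (r + 1) / (r + 1)) := by
        rw [intervalIntegral.integral_const_mul, integral_sub_rpow hr]

end Kernel

lemma integral_kernelIntegral_sq_le {f : ℝ → ℝ} (hf : Integrable f) (hf0 : ∀ x, 0 ≤ f x) {r : ℝ}
    (hr : -1 < r) (hr' : 2 * r < -1) {t₁ T : ℝ} (ht₁ : 1 ≤ t₁) (hT : t₁ ≤ T) :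
    ∫ t₂ in (0 : ℝ)..(t₁ - 1), kernelIntegral r f t₁ t₂ ^ 2
      ≤ ((∫ x, f x) * (T ^ (r + 1) / (r + 1))) ^ 2 / -(2 * r + 1) := by
  set B := (∫ x, f x) * (T ^ (r + 1) / (r + 1))
  have kernel_sq_le : ∀ t₂ ∈ Ioc 0 (t₁ - 1),
      kernelIntegral r f t₁ t₂ ^ 2 ≤ (t₁ - t₂) ^ (2 * r) * B ^ 2 := by
    intro t₂ ⟨ht₂, ht₂'⟩
    have hgap : 0 < t₁ - t₂ := by linarith
    have hker : kernelIntegral r f t₁ t₂ ≤ (t₁ - t₂) ^ r * B := by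
      calc kernelIntegral r f t₁ t₂
          ≤ (t₁ - t₂) ^ r * ((∫ x, f x) * (t₂ ^ (r + 1) / (r + 1))) := by
            rw [← mul_assoc]
            exact kernelIntegral_le hf hf0 hr (by linarith) ht₂.le (by linarith)
        _ ≤ (t₁ - t₂) ^ r * B := by
            refine mul_le_mul_of_nonneg_left (mul_le_mul_of_nonneg_left ?_ (integral_nonneg hf0))
              (by positivity)
            exact div_le_div_of_nonneg_right (rpow_le_rpow ht₂.le (by linarith) (by linarith))
              (by linarith)
    rw [show 2 * r = r * (2 : ℕ) by push_cast; ring, rpow_mul_natCast hgap.le, ← mul_pow]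
    exact pow_le_pow_left₀ (kernelIntegral_nonneg hf0 ht₂.le (by linarith)) hker 2
  have hcont : IntervalIntegrable (fun t₂ ↦ (t₁ - t₂) ^ (2 * r) * B ^ 2) volume 0 (t₁ - 1) := by
    refine ((continuousOn_const.sub continuousOn_id).rpow_const fun t₂ ht₂ ↦ .inl ?_).mul
      continuousOn_const |>.intervalIntegrable
    rw [uIcc_of_le (by linarith)] at ht₂
    show t₁ - t₂ ≠ 0
    linarith [ht₂.2]
  calc ∫ t₂ in (0 : ℝ)..(t₁ - 1), kernelIntegral r f t₁ t₂ ^ 2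
      ≤ ∫ t₂ in (0 : ℝ)..(t₁ - 1), (t₁ - t₂) ^ (2 * r) * B ^ 2 :=
        intervalIntegral_mono_of_nonneg (by linarith) (fun _ _ ↦ sq_nonneg _) kernel_sq_le hcont
    _ ≤ 1 / -(2 * r + 1) * B ^ 2 := by
        rw [intervalIntegral.integral_mul_const]
        exact mul_le_mul_of_nonneg_right (integral_sub_rpow_le hr' ht₁) (sq_nonneg B)
    _ = B ^ 2 / -(2 * r + 1) := by ring

theorem stmt_6_general (H : ℝ) (hH : H ∈ Set.Ioo (0 : ℝ) (1/2)) (c : ℝ → ℝ)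
    (hL1 : Integrable c) :
    ∃ C > 0, ∀ T ≥ (1 : ℝ),
      (1 / T ^ 2) * ∫ t₁ in (1 : ℝ)..T, ∫ t₂ in (0 : ℝ)..(t₁ - 1),
          (∫ s₂ in (0 : ℝ)..t₂, ∫ s₁ in (0 : ℝ)..t₂,
            (t₁ - s₁) ^ (-H - 1/2) * (t₂ - s₂) ^ (-H - 1/2) * |c (s₁ - s₂)|) ^ 2 ≤
        C * T ^ (-2 * H) := by
  obtain ⟨hH0, hH1⟩ := hH
  set K := ∫ x, |c x|
  set A := (K / (1/2 - H)) ^ 2 / (2 * H)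
  refine ⟨A + 1, by positivity, fun T hT ↦ ?_⟩
  have hT0 : 0 < T := by linarith
  have inner_le : ∀ t₁ ∈ Ioc 1 T,
      ∫ t₂ in (0 : ℝ)..(t₁ - 1), kernelIntegral (-H - 1/2) (fun x ↦ |c x|) t₁ t₂ ^ 2
        ≤ A * (T ^ (1/2 - H)) ^ 2 := by
    intro t₁ ht₁
    convert integral_kernelIntegral_sq_le hL1.abs (fun x ↦ abs_nonneg (c x)) (r := -H - 1/2)
      (by linarith) (by linarith) ht₁.1.le ht₁.2 using 1
    rw [show -H - 1/2 + 1 = 1/2 - H by ring, show -(2 * (-H - 1/2) + 1) = 2 * H by ring]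
    simp only [A, K]
    ring
  have hpow : (T ^ (1/2 - H)) ^ 2 = T * T ^ (-2 * H) := by
    rw [← rpow_mul_natCast hT0.le, ← rpow_one_add' hT0.le (by linarith)]
    ring_nf
  calc (1 / T ^ 2) * ∫ t₁ in (1 : ℝ)..T, ∫ t₂ in (0 : ℝ)..(t₁ - 1),
          kernelIntegral (-H - 1/2) (fun x ↦ |c x|) t₁ t₂ ^ 2
      ≤ (1 / T ^ 2) * ((T - 1) * (A * (T * T ^ (-2 * H)))) := by
        rw [← hpow]
        gcongr
        refine (intervalIntegral_mono_of_nonneg hT (fun t₁ ht₁ ↦ ?_) inner_le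
          intervalIntegrable_const).trans_eq (by rw [intervalIntegral.integral_const, smul_eq_mul])
        exact intervalIntegral.integral_nonneg (by linarith [ht₁.1]) fun _ _ ↦ sq_nonneg _
    _ = (1 - 1 / T) * (A * T ^ (-2 * H)) := by field_simp
    _ ≤ (A + 1) * T ^ (-2 * H) := by
        have hAP : 0 ≤ A * T ^ (-2 * H) := by positivity
        nlinarith [mul_nonneg (one_div_pos.2 hT0).le hAP]

/-- Bound for the term `I_{2,1}(T)`: for `H ∈ (0,1/2)` and `c ∈ L¹(ℝ)`, there is `C > 0`
such that for all `T ≥ 1`,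
`(1/T²) ∫₁^T ∫₀^{t₁-1} (∫₀^{t₂}∫₀^{t₂} (t₁-s₁)^{-H-1/2}(t₂-s₂)^{-H-1/2}|c(s₁-s₂)| ds₁ ds₂)² dt₂ dt₁
  ≤ C T^{-2H}`. -/
theorem stmt_6 (H : ℝ) (hH : H ∈ Set.Ioo (0 : ℝ) (1/2)) (c : ℝ → ℝ) (hc : Measurable c)
    (hL1 : Integrable c) :
    ∃ C > 0, ∀ T ≥ (1 : ℝ),
      (1 / T ^ 2) * ∫ t₁ in (1 : ℝ)..T, ∫ t₂ in (0 : ℝ)..(t₁ - 1),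
          (∫ s₂ in (0 : ℝ)..t₂, ∫ s₁ in (0 : ℝ)..t₂,
            (t₁ - s₁) ^ (-H - 1/2) * (t₂ - s₂) ^ (-H - 1/2) * |c (s₁ - s₂)|) ^ 2 ≤
        C * T ^ (-2 * H) :=
  stmt_6_general H hH c hL1
end

section
/- Let H ∈ (0, 1/2) and let c : ℝ → ℝ be a continuous even function for which there exists C₀ > 0 with |c(t)| ≤ C₀(1+|t|)^{2H−2} for all t ∈ ℝ. Then there exist constants κ > 0 and C > 0 such that for all T ≥ 1: (1/T²)·∫₀^{T} ∫₀^{t₁} ( ∫₀^{t₁} ∫₀^{t₂} (t₁−s₁)^{−H−1/2}(t₂−s₂)^{−H−1/2} |c(s₁−s₂)| ds₂ ds₁ )² dt₂ dt₁ ≤ C·T^{−κ}. -/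
open Real MeasureTheory

/-!
Write `a = H + 1/2 ∈ (1/2, 1)`. Everything rests on the uniform kernel estimate
`∫₀ᵗ u^(-a) (1 + |u - d|)^(-b) du ≤ K (1 + |d|)^(-γ)` for `0 ≤ γ < a` and `γ < a + b - 1`.
Since `1 + |d| ≤ u + (1 + |u - d|)` and `x ↦ x^γ` is subadditive, the weight `(1 + |d|)^γ` can
be moved onto one of the two factors, and the two resulting integrals are bounded uniformly in
`d` and `t` (by `∫₀¹ u^(-a)` near `0` and by Young's inequality on `[1, ∞)`).
Applied to the `s₂`-integral with `b = 2 - 2H` the estimate gives decay `(1 + |t₂ - s₁|)^(-1/2)`;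
applied again to the `s₁`-integral it gives decay `(1 + |t₁ - t₂|)^(-H/2)` for the inner double
integral. Its square then integrates to `O(T^(1-H))` in `t₂` and `O(T^(2-H))` in `t₁`, so
`κ = H` works.
-/

theorem intervalIntegral_mono_on_of_nonneg {f g : ℝ → ℝ} {a b : ℝ} (hab : a ≤ b)
    (hg : IntervalIntegrable g volume a b) (hg0 : ∀ x ∈ Set.Icc a b, 0 ≤ g x)
    (h : ∀ x ∈ Set.Icc a b, f x ≤ g x) :
    ∫ x in a..b, f x ≤ ∫ x in a..b, g x := by
  by_cases hf : IntervalIntegrable f volume a b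
  · exact intervalIntegral.integral_mono_on hab hf hg h
  · rw [intervalIntegral.integral_undef hf]
    exact intervalIntegral.integral_nonneg hab hg0

theorem intervalIntegrable_rpow_neg_mul_one_add_abs_sub {a b : ℝ} (ha : a < 1) (hb : 0 ≤ b)
    (d : ℝ) {t : ℝ} (ht : 0 ≤ t) :
    IntervalIntegrable (fun u => u ^ (-a) * (1 + |u - d|) ^ (-b)) volume 0 t := by
  refine (intervalIntegral.intervalIntegrable_rpow' (r := -a) (by linarith)).mono_fun
    (by fun_prop) ?_
  rw [Filter.EventuallyLE, ae_restrict_iff' measurableSet_uIoc]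
  refine Filter.Eventually.of_forall fun u hu => ?_
  have hu0 : 0 ≤ u := by
    rw [Set.uIoc_of_le ht] at hu
    exact hu.1.le
  have hk : (1 + |u - d|) ^ (-b) ≤ 1 :=
    rpow_le_one_of_one_le_of_nonpos (by simp) (by linarith)
  rw [norm_mul, norm_of_nonneg (rpow_nonneg hu0 _), norm_of_nonneg (rpow_nonneg (by positivity) _)]
  exact mul_le_of_le_one_right (rpow_nonneg hu0 _) hk

theorem integral_one_add_abs_rpow_neg_le {p : ℝ} (hp0 : 0 ≤ p) (hp1 : p < 1) {t : ℝ}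
    (ht : 0 ≤ t) :
    ∫ x in (0:ℝ)..t, (1 + |x|) ^ (-p) ≤ t ^ (1 - p) / (1 - p) := by
  have hshift : ∫ x in (0:ℝ)..t, (1 + |x|) ^ (-p) = ∫ x in (1:ℝ)..1 + t, x ^ (-p) := by
    have h := intervalIntegral.integral_comp_add_left (fun x => x ^ (-p)) 1 (a := 0) (b := t)
    rw [add_zero] at h
    rw [← h]
    refine intervalIntegral.integral_congr fun x hx => ?_
    rw [Set.uIcc_of_le ht] at hx
    simp only [abs_of_nonneg hx.1]
  rw [hshift, integral_rpow (Or.inl (by linarith)), one_rpow, show -p + 1 = 1 - p by ring]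
  gcongr
  linarith [rpow_add_le_add_rpow zero_le_one ht (by linarith : 0 ≤ 1 - p) (by linarith),
    one_rpow (1 - p)]

theorem integral_rpow_neg_le_of_one_le {p : ℝ} (hp : 1 < p) {T : ℝ} (hT : 1 ≤ T) :
    ∫ u in (1:ℝ)..T, u ^ (-p) ≤ 1 / (p - 1) := by
  have h0 : (0:ℝ) ∉ Set.uIcc 1 T := by
    rw [Set.uIcc_of_le hT]
    exact fun h => by linarith [h.1]
  rw [integral_rpow (Or.inr ⟨by linarith, h0⟩), one_rpow,
    show -p + 1 = -(p - 1) by ring, div_neg, ← neg_div, neg_sub]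
  gcongr
  linarith [rpow_nonneg (by linarith : (0:ℝ) ≤ T) (-(p - 1))]

theorem rpow_neg_mul_rpow_neg_le {a β θ u y : ℝ} (hθ0 : 0 < θ) (hθ1 : θ < 1) (hu : 0 ≤ u)
    (hy : 0 ≤ y) :
    u ^ (-a) * y ^ (-β) ≤ θ * u ^ (-(a / θ)) + (1 - θ) * y ^ (-(β / (1 - θ))) := by
  have h := geom_mean_le_arith_mean2_weighted hθ0.le (sub_nonneg.2 hθ1.le)
    (rpow_nonneg hu (-(a / θ))) (rpow_nonneg hy (-(β / (1 - θ)))) (by ring)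
  rwa [← rpow_mul hu, ← rpow_mul hy, neg_mul, neg_mul, div_mul_cancel₀ _ hθ0.ne',
    div_mul_cancel₀ _ (sub_ne_zero.2 hθ1.ne')] at h

theorem integral_one_rpow_neg_mul_one_add_abs_sub_le {a β θ : ℝ} (hθ0 : 0 < θ) (hθ1 : θ < 1)
    (ha : 1 < a / θ) (hβ : 1 < β / (1 - θ)) (d : ℝ) {T : ℝ} (hT : 1 ≤ T) :
    ∫ u in (1:ℝ)..T, u ^ (-a) * (1 + |u - d|) ^ (-β) ≤
      θ * (1 / (a / θ - 1)) + (1 - θ) * ∫ x, (1 + |x|) ^ (-(β / (1 - θ))) := by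
  set ψ : ℝ → ℝ := fun x => (1 + |x|) ^ (-(β / (1 - θ)))
  have hψ : Integrable ψ := by
    simpa using integrable_one_add_norm (E := ℝ) (μ := volume) (by simpa using hβ)
  have hψ0 : ∀ x, 0 ≤ ψ x := fun x => rpow_nonneg (by positivity) _
  have h0 : (0:ℝ) ∉ Set.uIcc 1 T := by
    rw [Set.uIcc_of_le hT]
    exact fun h => by linarith [h.1]
  have hpow : IntervalIntegrable (fun u => u ^ (-(a / θ))) volume 1 T :=
    intervalIntegral.intervalIntegrable_rpow (Or.inr h0)
  have hψd : IntervalIntegrable (fun u => ψ (u - d)) volume 1 T :=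
    (hψ.comp_sub_right d).intervalIntegrable
  have htail : ∫ u in (1:ℝ)..T, ψ (u - d) ≤ ∫ x, ψ x := by
    rw [intervalIntegral.integral_of_le hT, ← integral_sub_right_eq_self ψ d]
    exact setIntegral_le_integral (hψ.comp_sub_right d) (ae_of_all _ fun u => hψ0 _)
  calc ∫ u in (1:ℝ)..T, u ^ (-a) * (1 + |u - d|) ^ (-β)
      ≤ ∫ u in (1:ℝ)..T, (θ * u ^ (-(a / θ)) + (1 - θ) * ψ (u - d)) :=
        intervalIntegral_mono_on_of_nonneg hT ((hpow.const_mul _).add (hψd.const_mul _))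
          (fun u hu => add_nonneg (mul_nonneg hθ0.le (rpow_nonneg (by linarith [hu.1]) _))
            (mul_nonneg (by linarith) (hψ0 _)))
          fun u hu => rpow_neg_mul_rpow_neg_le hθ0 hθ1 (by linarith [hu.1]) (by positivity)
    _ = θ * (∫ u in (1:ℝ)..T, u ^ (-(a / θ))) + (1 - θ) * ∫ u in (1:ℝ)..T, ψ (u - d) := by
        rw [intervalIntegral.integral_add (hpow.const_mul _) (hψd.const_mul _),
          intervalIntegral.integral_const_mul, intervalIntegral.integral_const_mul]
    _ ≤ θ * (1 / (a / θ - 1)) + (1 - θ) * ∫ x, ψ x := by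
        gcongr
        exact integral_rpow_neg_le_of_one_le ha hT

theorem exists_forall_integral_rpow_neg_mul_one_add_abs_sub_le {a β : ℝ} (ha0 : 0 < a)
    (ha1 : a < 1) (haβ : 1 < a + β) :
    ∃ M > 0, ∀ d t : ℝ, 0 ≤ t → ∫ u in (0:ℝ)..t, u ^ (-a) * (1 + |u - d|) ^ (-β) ≤ M := by
  -- `θ` is chosen so that `u ^ (-a / θ)` and `(1 + |x|) ^ (-β / (1 - θ))` are both integrable
  -- at infinity.
  obtain ⟨θ, hθ, hθa⟩ := exists_between (max_lt ha0 (by linarith : 1 - β < a))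
  obtain ⟨hθ0, hθβ⟩ := max_lt_iff.1 hθ
  have hθ1 : 0 < 1 - θ := by linarith
  have hp : 1 < a / θ := (one_lt_div hθ0).2 hθa
  have hψ : 0 ≤ ∫ x : ℝ, (1 + |x|) ^ (-(β / (1 - θ))) :=
    integral_nonneg fun x => rpow_nonneg (by positivity) _
  refine ⟨1 / (1 - a) + (θ * (1 / (a / θ - 1)) + (1 - θ) * ∫ x : ℝ, (1 + |x|) ^ (-(β / (1 - θ)))),
    add_pos_of_pos_of_nonneg (by bound) (add_nonneg
      (mul_nonneg hθ0.le (one_div_nonneg.2 (by linarith))) (mul_nonneg hθ1.le hψ)),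
    fun d t ht => ?_⟩
  set f : ℝ → ℝ := fun u => u ^ (-a) * (1 + |u - d|) ^ (-β)
  have hf : ∀ t, 0 ≤ t → IntervalIntegrable f volume 0 t := fun t ht =>
    intervalIntegrable_rpow_neg_mul_one_add_abs_sub ha1 (by linarith) d ht
  set T := max t 1
  have hT : 1 ≤ T := le_max_right _ _
  have hsub : Set.uIcc 1 T ⊆ Set.uIcc 0 T :=
    Set.uIcc_subset_uIcc_right (Set.mem_uIcc_of_le zero_le_one hT)
  have near : ∫ u in (0:ℝ)..1, f u ≤ 1 / (1 - a) := by
    calc ∫ u in (0:ℝ)..1, f u ≤ ∫ u in (0:ℝ)..1, u ^ (-a) :=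
          intervalIntegral.integral_mono_on zero_le_one (hf 1 zero_le_one)
            (intervalIntegral.intervalIntegrable_rpow' (by linarith)) fun u hu =>
            mul_le_of_le_one_right (rpow_nonneg hu.1 _)
              (rpow_le_one_of_one_le_of_nonpos (by simp) (by linarith))
      _ = 1 / (1 - a) := by
          rw [integral_rpow (Or.inl (by linarith)), one_rpow, zero_rpow (by linarith),
            show -a + 1 = 1 - a by ring, sub_zero]
  calc ∫ u in (0:ℝ)..t, f u ≤ ∫ u in (0:ℝ)..T, f u :=
        intervalIntegral.integral_mono_interval le_rfl ht (le_max_left _ _)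
          ((ae_restrict_iff' measurableSet_Ioc).2 (ae_of_all _ fun u hu =>
            mul_nonneg (rpow_nonneg hu.1.le _) (rpow_nonneg (by positivity) _)))
          (hf T (by linarith))
    _ = (∫ u in (0:ℝ)..1, f u) + ∫ u in (1:ℝ)..T, f u :=
        (intervalIntegral.integral_add_adjacent_intervals (hf 1 zero_le_one)
          ((hf T (by linarith)).mono_set hsub)).symm
    _ ≤ _ := add_le_add near (integral_one_rpow_neg_mul_one_add_abs_sub_le hθ0 (by linarith)
          hp ((one_lt_div hθ1).2 (by linarith)) d hT)

theorem rpow_neg_mul_one_add_abs_sub_rpow_neg_le {a b γ u : ℝ} (d : ℝ) (hγ0 : 0 ≤ γ)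
    (hγ1 : γ ≤ 1) (hγa : γ ≠ a) (hu : 0 ≤ u) :
    u ^ (-a) * (1 + |u - d|) ^ (-b) ≤
      (1 + |d|) ^ (-γ) * (u ^ (-(a - γ)) * (1 + |u - d|) ^ (-b) +
        u ^ (-a) * (1 + |u - d|) ^ (-(b - γ))) := by
  have hd : 0 < 1 + |d| := by positivity
  set w := 1 + |u - d|
  have hw : 0 < w := by positivity
  have hdw : 1 + |d| ≤ u + w := by
    cases abs_cases d <;> cases abs_cases (u - d) <;> linarith
  have hγ : (1 + |d|) ^ γ ≤ u ^ γ + w ^ γ :=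
    (rpow_le_rpow hd.le hdw hγ0).trans (rpow_add_le_add_rpow hu hw.le hγ0 hγ1)
  have hone : 1 ≤ (1 + |d|) ^ (-γ) * (u ^ γ + w ^ γ) := by
    rwa [rpow_neg hd.le, one_le_inv_mul₀ (rpow_pos_of_pos hd γ)]
  rw [show -(a - γ) = -a + γ by ring, rpow_add' hu (by contrapose! hγa; linarith),
    show -(b - γ) = -b + γ by ring, rpow_add hw]
  calc u ^ (-a) * w ^ (-b) = u ^ (-a) * w ^ (-b) * 1 := (mul_one _).symm
    _ ≤ u ^ (-a) * w ^ (-b) * ((1 + |d|) ^ (-γ) * (u ^ γ + w ^ γ)) :=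
        mul_le_mul_of_nonneg_left hone (mul_nonneg (rpow_nonneg hu _) (rpow_nonneg hw.le _))
    _ = _ := by ring

theorem exists_forall_integral_rpow_neg_mul_one_add_abs_sub_le_mul_rpow_neg {a b γ : ℝ}
    (hγ0 : 0 ≤ γ) (hγa : γ < a) (ha1 : a < 1) (hγab : γ < a + b - 1) :
    ∃ K > 0, ∀ d t : ℝ, 0 ≤ t →
      ∫ u in (0:ℝ)..t, u ^ (-a) * (1 + |u - d|) ^ (-b) ≤ K * (1 + |d|) ^ (-γ) := by
  obtain ⟨M₁, hM₁, h₁⟩ := exists_forall_integral_rpow_neg_mul_one_add_abs_sub_le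
    (a := a - γ) (β := b) (by linarith) (by linarith) (by linarith)
  obtain ⟨M₂, hM₂, h₂⟩ := exists_forall_integral_rpow_neg_mul_one_add_abs_sub_le
    (a := a) (β := b - γ) (by linarith) ha1 (by linarith)
  refine ⟨M₁ + M₂, by positivity, fun d t ht => ?_⟩
  have hint : ∀ {a' b' : ℝ}, a' < 1 → 0 ≤ b' →
      IntervalIntegrable (fun u => u ^ (-a') * (1 + |u - d|) ^ (-b')) volume 0 t :=
    fun ha hb => intervalIntegrable_rpow_neg_mul_one_add_abs_sub ha hb d ht
  have hb : 0 ≤ b - γ := by linarith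
  calc ∫ u in (0:ℝ)..t, u ^ (-a) * (1 + |u - d|) ^ (-b)
      ≤ ∫ u in (0:ℝ)..t, (1 + |d|) ^ (-γ) * (u ^ (-(a - γ)) * (1 + |u - d|) ^ (-b) +
          u ^ (-a) * (1 + |u - d|) ^ (-(b - γ))) :=
        intervalIntegral.integral_mono_on ht (hint ha1 (by linarith))
          (((hint (by linarith) (by linarith)).add (hint ha1 hb)).const_mul _) fun u hu =>
          rpow_neg_mul_one_add_abs_sub_rpow_neg_le d hγ0 (by linarith) hγa.ne hu.1
    _ = (1 + |d|) ^ (-γ) * ((∫ u in (0:ℝ)..t, u ^ (-(a - γ)) * (1 + |u - d|) ^ (-b)) +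
          ∫ u in (0:ℝ)..t, u ^ (-a) * (1 + |u - d|) ^ (-(b - γ))) := by
        rw [intervalIntegral.integral_const_mul,
          intervalIntegral.integral_add (hint (by linarith) (by linarith)) (hint ha1 hb)]
    _ ≤ (1 + |d|) ^ (-γ) * (M₁ + M₂) := by
        gcongr
        exacts [h₁ d t ht, h₂ d t ht]
    _ = (M₁ + M₂) * (1 + |d|) ^ (-γ) := mul_comm _ _

theorem exists_forall_integral_sub_rpow_neg_mul_le {a b γ : ℝ} (hγ0 : 0 ≤ γ) (hγa : γ < a)
    (ha1 : a < 1) (hγab : γ < a + b - 1) :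
    ∃ K > 0, ∀ (f : ℝ → ℝ) (C x t : ℝ), 0 ≤ C → 0 ≤ t →
      (∀ s ∈ Set.Icc 0 t, f s ≤ C * (1 + |x - s|) ^ (-b)) →
      ∫ s in (0:ℝ)..t, (t - s) ^ (-a) * f s ≤ C * K * (1 + |t - x|) ^ (-γ) := by
  obtain ⟨K, hK, hbound⟩ :=
    exists_forall_integral_rpow_neg_mul_one_add_abs_sub_le_mul_rpow_neg hγ0 hγa ha1 hγab
  refine ⟨K, hK, fun f C x t hC ht hf => ?_⟩
  set k : ℝ → ℝ := fun u => u ^ (-a) * (1 + |u - (t - x)|) ^ (-b)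
  have hk : ∫ s in (0:ℝ)..t, k (t - s) = ∫ u in (0:ℝ)..t, k u := by
    simp [intervalIntegral.integral_comp_sub_left k t (a := 0) (b := t)]
  have hks : ∀ s, k (t - s) = (t - s) ^ (-a) * (1 + |x - s|) ^ (-b) := fun s => by
    simp only [k, sub_sub_sub_cancel_left]
  have hkint : IntervalIntegrable (fun s => k (t - s)) volume 0 t := by
    simp only [hks]
    have hb : 0 ≤ b := by linarith
    simpa using ((intervalIntegrable_rpow_neg_mul_one_add_abs_sub ha1 hb (t - x)
      ht).comp_sub_left t).symm
  calc ∫ s in (0:ℝ)..t, (t - s) ^ (-a) * f s ≤ ∫ s in (0:ℝ)..t, C * k (t - s) :=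
        intervalIntegral_mono_on_of_nonneg ht (hkint.const_mul C)
          (fun s hs => mul_nonneg hC
            (mul_nonneg (rpow_nonneg (by linarith [hs.2]) _) (rpow_nonneg (by positivity) _)))
          fun s hs => by
            rw [hks, mul_left_comm]
            exact mul_le_mul_of_nonneg_left (hf s hs) (rpow_nonneg (by linarith [hs.2]) _)
    _ = C * ∫ u in (0:ℝ)..t, k u := by rw [intervalIntegral.integral_const_mul, hk]
    _ ≤ C * (K * (1 + |t - x|) ^ (-γ)) := by gcongr; exact hbound _ t ht
    _ = C * K * (1 + |t - x|) ^ (-γ) := by ring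

theorem integral_sq_le_of_le_one_add_abs_rpow_neg {F : ℝ → ℝ} {D κ t : ℝ} (hκ0 : 0 ≤ κ)
    (hκ : κ < 1/2) (ht : 0 ≤ t)
    (hF : ∀ s ∈ Set.Icc 0 t, 0 ≤ F s ∧ F s ≤ D * (1 + |t - s|) ^ (-κ)) :
    ∫ s in (0:ℝ)..t, F s ^ 2 ≤ D ^ 2 * (t ^ (1 - 2 * κ) / (1 - 2 * κ)) := by
  have hcont : Continuous fun s => D ^ 2 * (1 + |t - s|) ^ (-(2 * κ)) :=
    ((continuous_const.add (continuous_const.sub continuous_id).abs).rpow_const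
      fun s => Or.inl (by positivity : 1 + |t - s| ≠ 0)).const_mul _
  calc ∫ s in (0:ℝ)..t, F s ^ 2 ≤ ∫ s in (0:ℝ)..t, D ^ 2 * (1 + |t - s|) ^ (-(2 * κ)) :=
        intervalIntegral_mono_on_of_nonneg ht (hcont.intervalIntegrable _ _)
          (fun _ _ => mul_nonneg (sq_nonneg D) (rpow_nonneg (by positivity) _)) fun s hs => by
            calc F s ^ 2 ≤ (D * (1 + |t - s|) ^ (-κ)) ^ 2 :=
                  pow_le_pow_left₀ (hF s hs).1 (hF s hs).2 2
              _ = D ^ 2 * (1 + |t - s|) ^ (-(2 * κ)) := by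
                  rw [mul_pow, ← rpow_mul_natCast (by positivity)]
                  ring_nf
    _ = D ^ 2 * ∫ v in (0:ℝ)..t, (1 + |v|) ^ (-(2 * κ)) := by
        rw [intervalIntegral.integral_const_mul,
          intervalIntegral.integral_comp_sub_left (fun v => (1 + |v|) ^ (-(2 * κ))), sub_self,
          sub_zero]
    _ ≤ D ^ 2 * (t ^ (1 - 2 * κ) / (1 - 2 * κ)) := by
        gcongr
        exact integral_one_add_abs_rpow_neg_le (by linarith) (by linarith) ht

theorem integral_integral_sq_le_of_le_one_add_abs_rpow_neg {F : ℝ → ℝ → ℝ} {D κ T : ℝ}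
    (hκ0 : 0 ≤ κ) (hκ : κ < 1/2) (hT : 0 < T)
    (hF : ∀ t₁ t₂, 0 ≤ t₂ → t₂ ≤ t₁ → 0 ≤ F t₁ t₂ ∧ F t₁ t₂ ≤ D * (1 + |t₁ - t₂|) ^ (-κ)) :
    (1 / T ^ 2) * ∫ t₁ in (0:ℝ)..T, ∫ t₂ in (0:ℝ)..t₁, F t₁ t₂ ^ 2 ≤
      D ^ 2 / (1 - 2 * κ) * T ^ (-(2 * κ)) := by
  have hM : 0 ≤ D ^ 2 * (T ^ (1 - 2 * κ) / (1 - 2 * κ)) :=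
    mul_nonneg (sq_nonneg D) (div_nonneg (rpow_nonneg hT.le _) (by linarith))
  have hslice : ∀ t₁ ∈ Set.Icc 0 T,
      ∫ t₂ in (0:ℝ)..t₁, F t₁ t₂ ^ 2 ≤ D ^ 2 * (T ^ (1 - 2 * κ) / (1 - 2 * κ)) := by
    intro t₁ ⟨ht₁, ht₁T⟩
    refine (integral_sq_le_of_le_one_add_abs_rpow_neg hκ0 hκ ht₁
      fun t₂ ht₂ => hF t₁ t₂ ht₂.1 ht₂.2).trans ?_
    gcongr
    · linarith
    · linarith
  calc _ ≤ (1 / T ^ 2) * ∫ t₁ in (0:ℝ)..T, D ^ 2 * (T ^ (1 - 2 * κ) / (1 - 2 * κ)) :=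
        mul_le_mul_of_nonneg_left (intervalIntegral_mono_on_of_nonneg hT.le
          intervalIntegrable_const (fun _ _ => hM) hslice) (by positivity)
    _ = D ^ 2 / (1 - 2 * κ) * T ^ (-(2 * κ)) := by
        rw [intervalIntegral.integral_const, smul_eq_mul, sub_zero,
          show 1 - 2 * κ = 1 + -(2 * κ) by ring, rpow_add hT, rpow_one]
        field_simp

noncomputable def doubleKernelIntegral (a : ℝ) (c : ℝ → ℝ) (t₁ t₂ : ℝ) : ℝ :=
  ∫ s₁ in (0:ℝ)..t₁, ∫ s₂ in (0:ℝ)..t₂, (t₁ - s₁) ^ (-a) * (t₂ - s₂) ^ (-a) * |c (s₁ - s₂)|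

theorem doubleKernelIntegral_nonneg (a : ℝ) (c : ℝ → ℝ) {t₁ t₂ : ℝ} (ht₂ : 0 ≤ t₂)
    (ht₂₁ : t₂ ≤ t₁) : 0 ≤ doubleKernelIntegral a c t₁ t₂ :=
  intervalIntegral.integral_nonneg (ht₂.trans ht₂₁) fun _ hs₁ =>
    intervalIntegral.integral_nonneg ht₂ fun _ hs₂ =>
      mul_nonneg (mul_nonneg (rpow_nonneg (sub_nonneg.2 hs₁.2) _)
        (rpow_nonneg (sub_nonneg.2 hs₂.2) _)) (abs_nonneg _)

theorem exists_doubleKernelIntegral_le {a b κ C₀ : ℝ} (c : ℝ → ℝ) (hκ0 : 0 ≤ κ)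
    (hκ : κ < a - 1/2) (ha1 : a < 1) (hb : 1 < b) (hC₀ : 0 < C₀)
    (hc : ∀ t, |c t| ≤ C₀ * (1 + |t|) ^ (-b)) :
    ∃ D > 0, ∀ t₁ t₂, 0 ≤ t₂ → t₂ ≤ t₁ →
      doubleKernelIntegral a c t₁ t₂ ≤ D * (1 + |t₁ - t₂|) ^ (-κ) := by
  obtain ⟨K₁, hK₁, hinner⟩ := exists_forall_integral_sub_rpow_neg_mul_le
    (a := a) (b := b) (γ := 1/2) (by norm_num) (by linarith) ha1 (by linarith)
  obtain ⟨K₂, hK₂, houter⟩ := exists_forall_integral_sub_rpow_neg_mul_le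
    (a := a) (b := 1/2) (γ := κ) hκ0 (by linarith) ha1 (by linarith)
  refine ⟨C₀ * K₁ * K₂, by positivity, fun t₁ t₂ ht₂ ht₂₁ => ?_⟩
  simp_rw [doubleKernelIntegral, mul_assoc _ _ |c _|, intervalIntegral.integral_const_mul]
  exact houter _ (C₀ * K₁) t₂ t₁ (by positivity) (ht₂.trans ht₂₁) fun s₁ _ =>
    hinner (fun s₂ => |c (s₁ - s₂)|) C₀ s₁ t₂ hC₀.le ht₂ fun s₂ _ => hc (s₁ - s₂)

theorem stmt_10_general (H : ℝ) (hH : H ∈ Set.Ioo (0 : ℝ) (1/2)) (c : ℝ → ℝ)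
    (C₀ : ℝ) (hC₀ : 0 < C₀) (hbound : ∀ t : ℝ, |c t| ≤ C₀ * (1 + |t|) ^ (2*H - 2)) :
    ∃ κ > (0 : ℝ), ∃ C > (0 : ℝ), ∀ T ≥ (1 : ℝ),
      (1 / T ^ 2) * ∫ t₁ in (0 : ℝ)..T, ∫ t₂ in (0 : ℝ)..t₁,
          (∫ s₁ in (0 : ℝ)..t₁, ∫ s₂ in (0 : ℝ)..t₂,
            (t₁ - s₁) ^ (-H - 1/2) * (t₂ - s₂) ^ (-H - 1/2) * |c (s₁ - s₂)|) ^ 2 ≤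
        C * T ^ (-κ) := by
  obtain ⟨hH0, hH1⟩ := hH
  obtain ⟨D, hD, hB⟩ := exists_doubleKernelIntegral_le (a := H + 1/2) (b := 2 - 2*H)
    (κ := H/2) c (by linarith) (by linarith) (by linarith) (by linarith) hC₀
    fun t => by simpa only [show 2*H - 2 = -(2 - 2*H) by ring] using hbound t
  refine ⟨2 * (H/2), by positivity, D ^ 2 / (1 - 2 * (H/2)), div_pos (pow_pos hD 2) (by linarith),
    fun T hT => ?_⟩
  simpa only [doubleKernelIntegral, show -H - 1/2 = -(H + 1/2) by ring] using
    integral_integral_sq_le_of_le_one_add_abs_rpow_neg (by linarith) (by linarith)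
      (by linarith : (0:ℝ) < T) fun t₁ t₂ ht₂ ht₂₁ =>
        ⟨doubleKernelIntegral_nonneg _ c ht₂ ht₂₁, hB t₁ t₂ ht₂ ht₂₁⟩

/-- Variance bound (analytic core of the `p = 2` case of Proposition 6.1): for `H ∈ (0,1/2)`
and a continuous even `c` with `|c(t)| ≤ C₀ (1+|t|)^{2H-2}`, there exist `κ > 0` and `C > 0`
such that for all `T ≥ 1`,
`(1/T²) ∫₀^T ∫₀^{t₁} (∫₀^{t₁}∫₀^{t₂} (t₁-s₁)^{-H-1/2}(t₂-s₂)^{-H-1/2}|c(s₁-s₂)| ds₂ ds₁)² dt₂ dt₁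
  ≤ C T^{-κ}`. -/
theorem stmt_10 (H : ℝ) (hH : H ∈ Set.Ioo (0 : ℝ) (1/2)) (c : ℝ → ℝ)
    (hc : Continuous c) (heven : ∀ t : ℝ, c (-t) = c t)
    (C₀ : ℝ) (hC₀ : 0 < C₀) (hbound : ∀ t : ℝ, |c t| ≤ C₀ * (1 + |t|) ^ (2*H - 2)) :
    ∃ κ > (0 : ℝ), ∃ C > (0 : ℝ), ∀ T ≥ (1 : ℝ),
      (1 / T ^ 2) * ∫ t₁ in (0 : ℝ)..T, ∫ t₂ in (0 : ℝ)..t₁,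
          (∫ s₁ in (0 : ℝ)..t₁, ∫ s₂ in (0 : ℝ)..t₂,
            (t₁ - s₁) ^ (-H - 1/2) * (t₂ - s₂) ^ (-H - 1/2) * |c (s₁ - s₂)|) ^ 2 ≤
        C * T ^ (-κ) :=
  stmt_10_general H hH c C₀ hC₀ hbound
end

section
/- Fix H ∈ (0, 1/2) and μ₀ ∈ ℝ. Let (φ_T)_{T>0} and φ̄ be real 2×2 matrices satisfying all six conditions of Assumption 1: √T·φ_T^{11} → φ̄_{11}, √T·φ_T^{12} → φ̄_{12}, T^{1−H}(μ₀φ_T^{11} − φ_T^{21}) → φ̄_{21}, T^{1−H}(μ₀φ_T^{12} − φ_T^{22}) → φ̄_{22} as T → ∞, det φ_T ≠ 0 for each T > 0, and det φ̄ ≠ 0. Then there exist C > 0 and T₀ > 0 such that the operator norm of φ_T^{−1} satisfies ‖φ_T^{−1}‖ ≤ C·T^{1−H} for all T ≥ T₀. -/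
open Real Filter Matrix

set_option maxHeartbeats 1000000 in
lemma opnorm_le_two_mul (M : Matrix (Fin 2) (Fin 2) ℝ) {m : ℝ}
    (hm : ∀ i j, |M i j| ≤ m) :
    ‖Matrix.toEuclideanCLM (𝕜 := ℝ) M‖ ≤ 2 * m := by
  have hm0 : 0 ≤ m := (abs_nonneg _).trans (hm 0 0)
  apply ContinuousLinearMap.opNorm_le_bound _ (by linarith)
  intro x
  have hy := Matrix.ofLp_toEuclideanCLM (𝕜 := ℝ) (n := Fin 2) M x
  have hy0 : (Matrix.toEuclideanCLM (𝕜 := ℝ) M x) 0 = M 0 0 * x 0 + M 0 1 * x 1 := by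
    have := congrFun hy 0
    simpa [Matrix.mulVec, dotProduct, Fin.sum_univ_two] using this
  have hy1 : (Matrix.toEuclideanCLM (𝕜 := ℝ) M x) 1 = M 1 0 * x 0 + M 1 1 * x 1 := by
    have := congrFun hy 1
    simpa [Matrix.mulVec, dotProduct, Fin.sum_univ_two] using this
  have hnx : ‖x‖ = Real.sqrt (x 0 ^ 2 + x 1 ^ 2) := by
    rw [EuclideanSpace.norm_eq]
    simp [Fin.sum_univ_two, Real.norm_eq_abs, sq_abs]
  have hnMx : ‖Matrix.toEuclideanCLM (𝕜 := ℝ) M x‖ =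
      Real.sqrt ((M 0 0 * x 0 + M 0 1 * x 1) ^ 2 + (M 1 0 * x 0 + M 1 1 * x 1) ^ 2) := by
    rw [EuclideanSpace.norm_eq]
    simp [Fin.sum_univ_two, Real.norm_eq_abs, sq_abs, hy0, hy1]
  rw [hnMx, hnx]
  have key : (M 0 0 * x 0 + M 0 1 * x 1) ^ 2 + (M 1 0 * x 0 + M 1 1 * x 1) ^ 2
      ≤ (2 * m) ^ 2 * (x 0 ^ 2 + x 1 ^ 2) := by
    have h00 := abs_le.1 (hm 0 0); have h01 := abs_le.1 (hm 0 1)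
    have h10 := abs_le.1 (hm 1 0); have h11 := abs_le.1 (hm 1 1)
    nlinarith [sq_nonneg (x 0 + x 1), sq_nonneg (x 0 - x 1), sq_nonneg (x 0), sq_nonneg (x 1),
      sq_nonneg (M 0 0 * x 0 + M 0 1 * x 1), sq_nonneg (M 1 0 * x 0 + M 1 1 * x 1),
      sq_nonneg (M 0 0 * x 0 - M 0 1 * x 1), sq_nonneg (M 1 0 * x 0 - M 1 1 * x 1),
      mul_nonneg hm0 hm0,
      mul_le_mul (hm 0 0) (hm 0 0) (abs_nonneg _) hm0,
      mul_le_mul (hm 0 1) (hm 0 1) (abs_nonneg _) hm0,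
      mul_le_mul (hm 1 0) (hm 1 0) (abs_nonneg _) hm0,
      mul_le_mul (hm 1 1) (hm 1 1) (abs_nonneg _) hm0,
      sq_abs (M 0 0), sq_abs (M 0 1), sq_abs (M 1 0), sq_abs (M 1 1),
      abs_mul (M 0 0) (x 0)]
  calc Real.sqrt ((M 0 0 * x 0 + M 0 1 * x 1) ^ 2 + (M 1 0 * x 0 + M 1 1 * x 1) ^ 2)
      ≤ Real.sqrt ((2 * m) ^ 2 * (x 0 ^ 2 + x 1 ^ 2)) := Real.sqrt_le_sqrt key
    _ = 2 * m * Real.sqrt (x 0 ^ 2 + x 1 ^ 2) := by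
        rw [Real.sqrt_mul (by positivity), Real.sqrt_sq (by linarith)]

set_option maxHeartbeats 1000000 in
/-- Under Assumption 1 (conditions (1)–(6)), the operator norm of `φ_T⁻¹` satisfies
`‖φ_T⁻¹‖ ≤ C T^{1-H}` for all large `T`. -/
theorem stmt_13 (H μ₀ : ℝ) (hH : H ∈ Set.Ioo (0 : ℝ) (1/2))
    (φ : ℝ → Matrix (Fin 2) (Fin 2) ℝ) (φbar : Matrix (Fin 2) (Fin 2) ℝ)
    (h11 : Tendsto (fun T : ℝ => Real.sqrt T * φ T 0 0) atTop (nhds (φbar 0 0)))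
    (h12 : Tendsto (fun T : ℝ => Real.sqrt T * φ T 0 1) atTop (nhds (φbar 0 1)))
    (h21 : Tendsto (fun T : ℝ => T ^ (1 - H) * (μ₀ * φ T 0 0 - φ T 1 0)) atTop
      (nhds (φbar 1 0)))
    (h22 : Tendsto (fun T : ℝ => T ^ (1 - H) * (μ₀ * φ T 0 1 - φ T 1 1)) atTop
      (nhds (φbar 1 1)))
    (hdet : ∀ T > (0 : ℝ), (φ T).det ≠ 0)
    (hdetbar : φbar.det ≠ 0) :
    ∃ C > (0 : ℝ), ∃ T₀ > (0 : ℝ), ∀ T ≥ T₀,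
      ‖Matrix.toEuclideanCLM (𝕜 := ℝ) ((φ T)⁻¹)‖ ≤ C * T ^ (1 - H) := by
  obtain ⟨hH0, hH1⟩ := hH
  -- T ^ (H - 1/2) → 0
  have hpow : Tendsto (fun T : ℝ => T ^ (H - 1/2)) atTop (nhds 0) := by
    simpa [neg_sub] using tendsto_rpow_neg_atTop (show (0:ℝ) < 1/2 - H by linarith)
  -- scaled entries of the second row
  have hc : Tendsto (fun T : ℝ => Real.sqrt T * φ T 1 0) atTop (nhds (μ₀ * φbar 0 0)) := by
    have h := (h11.const_mul μ₀).sub (hpow.mul h21)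
    rw [zero_mul, sub_zero] at h
    refine Filter.Tendsto.congr' ?_ h
    filter_upwards [eventually_gt_atTop (0:ℝ)] with T hT
    have h2 : T ^ (H - 1/2) * T ^ (1 - H) = Real.sqrt T := by
      rw [← Real.rpow_add hT, Real.sqrt_eq_rpow]; norm_num
    linear_combination (φ T 1 0 - μ₀ * φ T 0 0) * h2
  have hd : Tendsto (fun T : ℝ => Real.sqrt T * φ T 1 1) atTop (nhds (μ₀ * φbar 0 1)) := by
    have h := (h12.const_mul μ₀).sub (hpow.mul h22)
    rw [zero_mul, sub_zero] at h
    refine Filter.Tendsto.congr' ?_ h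
    filter_upwards [eventually_gt_atTop (0:ℝ)] with T hT
    have h2 : T ^ (H - 1/2) * T ^ (1 - H) = Real.sqrt T := by
      rw [← Real.rpow_add hT, Real.sqrt_eq_rpow]; norm_num
    linear_combination (φ T 1 1 - μ₀ * φ T 0 1) * h2
  -- scaled determinant
  have hg : Tendsto (fun T : ℝ => T ^ (3/2 - H) * (φ T).det) atTop (nhds (-φbar.det)) := by
    have h := (h12.mul h21).sub (h11.mul h22)
    have hval : φbar 0 1 * φbar 1 0 - φbar 0 0 * φbar 1 1 = -φbar.det := by
      rw [Matrix.det_fin_two]; ring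
    rw [hval] at h
    refine Filter.Tendsto.congr' ?_ h
    filter_upwards [eventually_gt_atTop (0:ℝ)] with T hT
    have h2 : Real.sqrt T * T ^ (1 - H) = T ^ (3/2 - H : ℝ) := by
      rw [Real.sqrt_eq_rpow, ← Real.rpow_add hT]; congr 1; ring
    rw [Matrix.det_fin_two]
    calc Real.sqrt T * φ T 0 1 * (T ^ (1 - H) * (μ₀ * φ T 0 0 - φ T 1 0)) -
          Real.sqrt T * φ T 0 0 * (T ^ (1 - H) * (μ₀ * φ T 0 1 - φ T 1 1))
        = (Real.sqrt T * T ^ (1 - H)) * (φ T 0 0 * φ T 1 1 - φ T 0 1 * φ T 1 0) := by ring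
      _ = T ^ (3/2 - H : ℝ) * (φ T 0 0 * φ T 1 1 - φ T 0 1 * φ T 1 0) := by rw [h2]
  set δ : ℝ := |φbar.det| / 2 with hδdef
  have hδ : 0 < δ := by
    have := abs_pos.2 hdetbar; simp only [hδdef]; linarith
  set K : ℝ := max (max (|φbar 0 0| + 1) (|φbar 0 1| + 1))
      (max (|μ₀ * φbar 0 0| + 1) (|μ₀ * φbar 0 1| + 1)) with hKdef
  have hK : 0 < K := by
    have h1 : (0:ℝ) < |φbar 0 0| + 1 := by positivity
    exact h1.trans_le ((le_max_left _ _).trans (le_max_left _ _))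
  have e1 : ∀ᶠ T in atTop, |Real.sqrt T * φ T 0 0| ≤ K :=
    (h11.abs.eventually_le_const (lt_add_one _)).mono fun T h =>
      h.trans ((le_max_left _ _).trans (le_max_left _ _))
  have e2 : ∀ᶠ T in atTop, |Real.sqrt T * φ T 0 1| ≤ K :=
    (h12.abs.eventually_le_const (lt_add_one _)).mono fun T h =>
      h.trans ((le_max_right _ _).trans (le_max_left _ _))
  have e3 : ∀ᶠ T in atTop, |Real.sqrt T * φ T 1 0| ≤ K :=
    (hc.abs.eventually_le_const (lt_add_one _)).mono fun T h =>
      h.trans ((le_max_left _ _).trans (le_max_right _ _))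
  have e4 : ∀ᶠ T in atTop, |Real.sqrt T * φ T 1 1| ≤ K :=
    (hd.abs.eventually_le_const (lt_add_one _)).mono fun T h =>
      h.trans ((le_max_right _ _).trans (le_max_right _ _))
  have e5 : ∀ᶠ T in atTop, δ ≤ |T ^ (3/2 - H : ℝ) * (φ T).det| := by
    refine hg.abs.eventually_const_le ?_
    rw [abs_neg]
    exact half_lt_self (abs_pos.2 hdetbar)
  refine ⟨2 * (K / δ), by positivity, ?_⟩
  have emain : ∀ᶠ T in atTop,
      ‖Matrix.toEuclideanCLM (𝕜 := ℝ) ((φ T)⁻¹)‖ ≤ 2 * (K / δ) * T ^ (1 - H) := by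
    filter_upwards [e1, e2, e3, e4, e5, eventually_gt_atTop (0:ℝ)] with T b1 b2 b3 b4 b5 hT
    have hs : 0 < Real.sqrt T := Real.sqrt_pos.2 hT
    -- lower bound on |det|
    have hdet_lb : δ * T ^ (H - 3/2 : ℝ) ≤ |(φ T).det| := by
      have habs : |T ^ (3/2 - H : ℝ) * (φ T).det| = T ^ (3/2 - H : ℝ) * |(φ T).det| := by
        rw [abs_mul, abs_of_pos (Real.rpow_pos_of_pos hT _)]
      rw [habs] at b5
      have hmul := mul_le_mul_of_nonneg_left b5 (le_of_lt (Real.rpow_pos_of_pos hT (H - 3/2)))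
      have hone : T ^ (H - 3/2 : ℝ) * (T ^ (3/2 - H : ℝ) * |(φ T).det|) = |(φ T).det| := by
        rw [← mul_assoc, ← Real.rpow_add hT]
        norm_num
      rw [hone] at hmul
      linarith [hmul]
    -- entry bounds of φ T
    have hb : ∀ i j, |φ T i j| ≤ K / Real.sqrt T := by
      intro i j
      have hij : |Real.sqrt T * φ T i j| ≤ K := by
        fin_cases i <;> fin_cases j <;> assumption
      rw [abs_mul, abs_of_pos hs] at hij
      rw [le_div_iff₀ hs, mul_comm]
      exact hij
    -- entry bound on the inverse
    have hdetT : (φ T).det ≠ 0 := hdet T hT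
    have hinv_entry : ∀ i j, |(φ T)⁻¹ i j| ≤ K / δ * T ^ (1 - H) := by
      intro i j
      have hrep : (φ T)⁻¹ = ((φ T).det)⁻¹ • (φ T).adjugate := by
        rw [Matrix.inv_def, Ring.inverse_eq_inv']
      have hadj : |(φ T).adjugate i j| ≤ K / Real.sqrt T := by
        fin_cases i <;> fin_cases j <;>
          simp only [Matrix.adjugate_fin_two, Matrix.cons_val', Matrix.cons_val_zero,
            Matrix.cons_val_one, Matrix.head_cons, Matrix.head_fin_const, Matrix.empty_val',
            Matrix.cons_val_fin_one, Matrix.of_apply, Fin.mk_zero, Fin.mk_one, abs_neg] <;>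
          exact hb _ _
      have : |(φ T)⁻¹ i j| = |(φ T).adjugate i j| / |(φ T).det| := by
        rw [hrep, Matrix.smul_apply, smul_eq_mul, abs_mul, abs_inv]
        ring
      rw [this]
      have hdpos : 0 < |(φ T).det| := abs_pos.2 hdetT
      calc |(φ T).adjugate i j| / |(φ T).det|
          ≤ (K / Real.sqrt T) / (δ * T ^ (H - 3/2 : ℝ)) := by
            apply div_le_div₀ (by positivity) hadj (by positivity) hdet_lb
        _ = K / δ * T ^ (1 - H) := by
            rw [Real.sqrt_eq_rpow, div_div]
            have hx : T ^ ((1:ℝ)/2) * T ^ (H - 3/2 : ℝ) * T ^ (1 - H) = 1 := by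
              rw [← Real.rpow_add hT, ← Real.rpow_add hT,
                show (1:ℝ)/2 + (H - 3/2) + (1 - H) = 0 by ring, Real.rpow_zero]
            rw [div_mul_eq_mul_div K δ (T ^ (1 - H)), div_eq_div_iff (by positivity) hδ.ne']
            linear_combination (-(K * δ)) * hx
    have := opnorm_le_two_mul ((φ T)⁻¹) hinv_entry
    calc ‖Matrix.toEuclideanCLM (𝕜 := ℝ) ((φ T)⁻¹)‖ ≤ 2 * (K / δ * T ^ (1 - H)) := this
      _ = 2 * (K / δ) * T ^ (1 - H) := by ring
  rw [eventually_atTop] at emain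
  obtain ⟨T₀, hT₀⟩ := emain
  refine ⟨max T₀ 1, lt_of_lt_of_le one_pos (le_max_right _ _), fun T hT =>
    hT₀ T ((le_max_left _ _).trans hT)⟩
end

section
/- Fix H ∈ (0, 1/2) and θ₀ = (α₀, μ₀) with α₀ > 0. Define g : ℝ² → ℝ² by g(α, μ) := (α, αμ), with Jacobian matrix J_g(α, μ) having rows (1, 0) and (μ, α). Let (φ_T)_{T>0} and φ̄ be real 2×2 matrices satisfying all six conditions of Assumption 1: √T·φ_T^{11} → φ̄_{11}, √T·φ_T^{12} → φ̄_{12}, T^{1−H}(μ₀φ_T^{11} − φ_T^{21}) → φ̄_{21}, T^{1−H}(μ₀φ_T^{12} − φ_T^{22}) → φ̄_{22} as T → ∞, det φ_T ≠ 0 for each T > 0, and det φ̄ ≠ 0. Set Ψ_T := J_g(θ₀)^{−1} φ_T. Then for every u ∈ ℝ² there exist C > 0 and T₀ > 0 such that for all T ≥ T₀: ‖ φ_T^{−1} ∫₀¹ ( J_g(θ₀ + ε Ψ_T u) − J_g(θ₀) ) Ψ_T u dε ‖ ≤ C·T^{−1/2}. -/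
open Real Filter Matrix MeasureTheory Topology

/-!
Since `g` is quadratic, the remainder is explicit: with `v = Ψ_T u` it equals `φ_T⁻¹ (0, v₀ v₁)`.
Row-rescaling `φ_T` by `√T` and `T^{1-H}` after the change of rows `(r₀, r₁) ↦ (r₀, μ₀ r₀ - r₁)`
gives matrices `A_T → φ̄` (Assumption 1), and `√T R̃_T = A_T⁻¹ (0, α₀⁻¹ (A_T u)₀ (A_T u)₁)`.
As `det φ̄ ≠ 0`, the right side converges, so `√T R̃_T` is eventually bounded.
-/

lemma integral_sub_jacobian_mulVec (θ v : Fin 2 → ℝ) :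
    ∫ ε in (0 : ℝ)..1,
      (!![1, 0; (θ + ε • v) 1, (θ + ε • v) 0] - !![1, 0; θ 1, θ 0]) *ᵥ v = ![0, v 0 * v 1] := by
  have h (ε : ℝ) : (!![1, 0; (θ + ε • v) 1, (θ + ε • v) 0] - !![1, 0; θ 1, θ 0]) *ᵥ v
      = ε • ![0, 2 * (v 0 * v 1)] := by
    ext i; fin_cases i <;> simp [mulVec, dotProduct, Fin.sum_univ_two]; ring
  simp_rw [h]
  rw [intervalIntegral.integral_smul_const, integral_id]
  ext i; fin_cases i <;> simp

section Rescaling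

variable (α₀ μ₀ s t : ℝ)

lemma rescaling_mul_jacobian :
    !![s, 0; t * μ₀, -t] * !![1, 0; μ₀, α₀] = !![s, 0; 0, -(t * α₀)] := by
  ext i j; fin_cases i <;> fin_cases j <;> simp

lemma inv_rescaling_mulVec (hs : s ≠ 0) (ht : t ≠ 0) (x : ℝ) :
    !![s, 0; t * μ₀, -t]⁻¹ *ᵥ ![0, x] = ![0, -(x / t)] := by
  have hinv : !![s, 0; t * μ₀, -t]⁻¹ = !![s⁻¹, 0; μ₀ / s, -t⁻¹] := by
    apply inv_eq_left_inv
    ext i j; fin_cases i <;> fin_cases j <;> simp [hs, ht]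
  rw [hinv]
  ext i; fin_cases i <;> simp; ring

lemma smul_inv_mulVec_eq_rescaled (hα₀ : α₀ ≠ 0) (hs : s ≠ 0) (ht : t ≠ 0)
    (φ : Matrix (Fin 2) (Fin 2) ℝ) (u : Fin 2 → ℝ) :
    s • φ⁻¹ *ᵥ ![0, ((!![1, 0; μ₀, α₀]⁻¹ * φ) *ᵥ u) 0 * ((!![1, 0; μ₀, α₀]⁻¹ * φ) *ᵥ u) 1]
      = (!![s, 0; t * μ₀, -t] * φ)⁻¹ *ᵥ
          ![0, α₀⁻¹ * ((!![s, 0; t * μ₀, -t] * φ) *ᵥ u) 0 *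
            ((!![s, 0; t * μ₀, -t] * φ) *ᵥ u) 1] := by
  set J := !![1, 0; μ₀, α₀]
  set B := !![s, 0; t * μ₀, -t]
  set v := (J⁻¹ * φ) *ᵥ u
  have hJ : IsUnit J.det := by simpa [J, det_fin_two] using hα₀
  have hu : (B * φ) *ᵥ u = ![s * v 0, -(t * α₀) * v 1] := by
    rw [show B * φ = (B * J) * (J⁻¹ * φ) by
      rw [Matrix.mul_assoc, ← Matrix.mul_assoc J, mul_nonsing_inv J hJ, Matrix.one_mul],
      ← mulVec_mulVec, rescaling_mul_jacobian]
    ext i; fin_cases i <;> simp [v] <;> ring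
  rw [hu, Matrix.mul_inv_rev, ← mulVec_mulVec, inv_rescaling_mulVec μ₀ s t hs ht, ← mulVec_smul]
  congr 1
  ext i; fin_cases i <;> simp; field_simp

end Rescaling

lemma Filter.Tendsto.inv_mulVec {α n : Type*} [Fintype n] [DecidableEq n] {l : Filter α}
    {A : α → Matrix n n ℝ} {A₀ : Matrix n n ℝ} {w : α → n → ℝ} {w₀ : n → ℝ}
    (hA : Tendsto A l (𝓝 A₀)) (hA₀ : A₀.det ≠ 0) (hw : Tendsto w l (𝓝 w₀)) :
    Tendsto (fun x => (A x)⁻¹ *ᵥ w x) l (𝓝 (A₀⁻¹ *ᵥ w₀)) := by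
  have hinv : ContinuousAt Inv.inv A₀ := by
    apply continuousAt_matrix_inv
    rw [Ring.inverse_eq_inv']
    exact continuousAt_inv₀ hA₀
  exact ((continuous_fst.matrix_mulVec continuous_snd).tendsto _).comp
    ((hinv.tendsto.comp hA).prodMk_nhds hw)

lemma exists_norm_le_mul_rpow_neg_half {E : Type*} [SeminormedAddCommGroup E] [NormedSpace ℝ E]
    {x : ℝ → E} {L : E} (h : Tendsto (fun T => √T • x T) atTop (𝓝 L)) :
    ∃ C > 0, ∃ T₀ > 0, ∀ T ≥ T₀, ‖x T‖ ≤ C * T ^ (-(1 : ℝ) / 2) := by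
  obtain ⟨T₁, hT₁⟩ := eventually_atTop.1 <|
    h.norm.eventually (eventually_le_nhds (lt_add_one ‖L‖))
  refine ⟨‖L‖ + 1, by positivity, max T₁ 1, by positivity, fun T hT => ?_⟩
  have hT₀ : 0 < T := lt_of_lt_of_le one_pos (le_of_max_le_right hT)
  have hbound := hT₁ T (le_of_max_le_left hT)
  rw [norm_smul, norm_of_nonneg (sqrt_nonneg T)] at hbound
  calc ‖x T‖ ≤ (‖L‖ + 1) / √T := by rw [le_div_iff₀ (sqrt_pos.2 hT₀), mul_comm]; exact hbound
    _ = (‖L‖ + 1) * T ^ (-(1 : ℝ) / 2) := by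
      rw [sqrt_eq_rpow, div_eq_mul_inv, ← rpow_neg hT₀.le]; norm_num

lemma tendsto_rescaled_rate (H μ₀ : ℝ) {φ : ℝ → Matrix (Fin 2) (Fin 2) ℝ}
    {φbar : Matrix (Fin 2) (Fin 2) ℝ}
    (h11 : Tendsto (fun T : ℝ => √T * φ T 0 0) atTop (𝓝 (φbar 0 0)))
    (h12 : Tendsto (fun T : ℝ => √T * φ T 0 1) atTop (𝓝 (φbar 0 1)))
    (h21 : Tendsto (fun T : ℝ => T ^ (1 - H) * (μ₀ * φ T 0 0 - φ T 1 0)) atTop (𝓝 (φbar 1 0)))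
    (h22 : Tendsto (fun T : ℝ => T ^ (1 - H) * (μ₀ * φ T 0 1 - φ T 1 1)) atTop (𝓝 (φbar 1 1))) :
    Tendsto (fun T => !![√T, 0; T ^ (1 - H) * μ₀, -T ^ (1 - H)] * φ T) atTop (𝓝 φbar) := by
  refine tendsto_pi_nhds.2 fun i => tendsto_pi_nhds.2 fun j => ?_
  fin_cases i <;> fin_cases j
  · simpa [mul_apply, Fin.sum_univ_two] using h11
  · simpa [mul_apply, Fin.sum_univ_two] using h12
  · refine h21.congr fun T => ?_; simp [mul_apply, Fin.sum_univ_two]; ring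
  · refine h22.congr fun T => ?_; simp [mul_apply, Fin.sum_univ_two]; ring

theorem stmt_14_general (H α₀ μ₀ : ℝ) (hα₀ : 0 < α₀)
    (θ₀ : Fin 2 → ℝ) (hθ₀ : θ₀ = ![α₀, μ₀])
    (Jg : (Fin 2 → ℝ) → Matrix (Fin 2) (Fin 2) ℝ)
    (hJg : ∀ v : Fin 2 → ℝ, Jg v = !![1, 0; v 1, v 0])
    (φ : ℝ → Matrix (Fin 2) (Fin 2) ℝ) (φbar : Matrix (Fin 2) (Fin 2) ℝ)
    (h11 : Tendsto (fun T : ℝ => Real.sqrt T * φ T 0 0) atTop (nhds (φbar 0 0)))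
    (h12 : Tendsto (fun T : ℝ => Real.sqrt T * φ T 0 1) atTop (nhds (φbar 0 1)))
    (h21 : Tendsto (fun T : ℝ => T ^ (1 - H) * (μ₀ * φ T 0 0 - φ T 1 0)) atTop
      (nhds (φbar 1 0)))
    (h22 : Tendsto (fun T : ℝ => T ^ (1 - H) * (μ₀ * φ T 0 1 - φ T 1 1)) atTop
      (nhds (φbar 1 1)))
    (hdetbar : φbar.det ≠ 0)
    (Ψ : ℝ → Matrix (Fin 2) (Fin 2) ℝ) (hΨ : ∀ T : ℝ, Ψ T = (Jg θ₀)⁻¹ * φ T) :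
    ∀ u : Fin 2 → ℝ, ∃ C > (0 : ℝ), ∃ T₀ > (0 : ℝ), ∀ T ≥ T₀,
      ‖(φ T)⁻¹.mulVec
          (∫ ε in (0 : ℝ)..1,
            (Jg (θ₀ + ε • (Ψ T).mulVec u) - Jg θ₀).mulVec ((Ψ T).mulVec u))‖ ≤
        C * T ^ (-(1 : ℝ)/2) := by
  intro u
  set A := fun T : ℝ => !![√T, 0; T ^ (1 - H) * μ₀, -T ^ (1 - H)] * φ T
  have hrescaled : ∀ T > (0 : ℝ), √T • (φ T)⁻¹ *ᵥ
      (∫ ε in (0 : ℝ)..1, (Jg (θ₀ + ε • (Ψ T) *ᵥ u) - Jg θ₀) *ᵥ ((Ψ T) *ᵥ u))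
        = (A T)⁻¹ *ᵥ ![0, α₀⁻¹ * (A T *ᵥ u) 0 * (A T *ᵥ u) 1] := by
    intro T hT
    simp only [hΨ, hJg]
    rw [integral_sub_jacobian_mulVec, hθ₀]
    simp only [cons_val_zero, cons_val_one]
    exact smul_inv_mulVec_eq_rescaled α₀ μ₀ √T (T ^ (1 - H)) hα₀.ne' (sqrt_pos.2 hT).ne'
      (rpow_pos_of_pos hT _).ne' (φ T) u
  have hA := tendsto_rescaled_rate H μ₀ h11 h12 h21 h22
  have hw : Continuous fun B : Matrix (Fin 2) (Fin 2) ℝ =>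
      ![0, α₀⁻¹ * (B *ᵥ u) 0 * (B *ᵥ u) 1] := by fun_prop
  refine exists_norm_le_mul_rpow_neg_half
    ((hA.inv_mulVec hdetbar ((hw.tendsto φbar).comp hA)).congr' ?_)
  filter_upwards [eventually_gt_atTop 0] with T hT
  exact (hrescaled T hT).symm

/-- Taylor remainder estimate in the proof of the LAN property for the parameterization
`θ = (α, μ)`: with `g(α,μ) = (α, αμ)`, `J_g(α,μ) = !![1,0; μ,α]`, `Ψ_T = J_g(θ₀)⁻¹ φ_T` and
`φ_T` satisfying Assumption 1, for every `u ∈ ℝ²` there are `C > 0` and `T₀ > 0` with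
`‖φ_T⁻¹ ∫₀¹ (J_g(θ₀ + ε Ψ_T u) - J_g(θ₀)) Ψ_T u dε‖ ≤ C T^{-1/2}` for all `T ≥ T₀`. -/
theorem stmt_14 (H α₀ μ₀ : ℝ) (hH : H ∈ Set.Ioo (0 : ℝ) (1/2)) (hα₀ : 0 < α₀)
    (θ₀ : Fin 2 → ℝ) (hθ₀ : θ₀ = ![α₀, μ₀])
    (Jg : (Fin 2 → ℝ) → Matrix (Fin 2) (Fin 2) ℝ)
    (hJg : ∀ v : Fin 2 → ℝ, Jg v = !![1, 0; v 1, v 0])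
    (φ : ℝ → Matrix (Fin 2) (Fin 2) ℝ) (φbar : Matrix (Fin 2) (Fin 2) ℝ)
    (h11 : Tendsto (fun T : ℝ => Real.sqrt T * φ T 0 0) atTop (nhds (φbar 0 0)))
    (h12 : Tendsto (fun T : ℝ => Real.sqrt T * φ T 0 1) atTop (nhds (φbar 0 1)))
    (h21 : Tendsto (fun T : ℝ => T ^ (1 - H) * (μ₀ * φ T 0 0 - φ T 1 0)) atTop
      (nhds (φbar 1 0)))
    (h22 : Tendsto (fun T : ℝ => T ^ (1 - H) * (μ₀ * φ T 0 1 - φ T 1 1)) atTop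
      (nhds (φbar 1 1)))
    (hdet : ∀ T > (0 : ℝ), (φ T).det ≠ 0)
    (hdetbar : φbar.det ≠ 0)
    (Ψ : ℝ → Matrix (Fin 2) (Fin 2) ℝ) (hΨ : ∀ T : ℝ, Ψ T = (Jg θ₀)⁻¹ * φ T) :
    ∀ u : Fin 2 → ℝ, ∃ C > (0 : ℝ), ∃ T₀ > (0 : ℝ), ∀ T ≥ T₀,
      ‖(φ T)⁻¹.mulVec
          (∫ ε in (0 : ℝ)..1,
            (Jg (θ₀ + ε • (Ψ T).mulVec u) - Jg θ₀).mulVec ((Ψ T).mulVec u))‖ ≤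
        C * T ^ (-(1 : ℝ)/2) :=
  stmt_14_general H α₀ μ₀ hα₀ θ₀ hθ₀ Jg hJg φ φbar h11 h12 h21 h22 hdetbar Ψ hΨ
end
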